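/- arXiv:1405.1012 — 12 statements merged into one kernel-verified Lean document; each statement's English description precedes it below -/
import Mathlib

section
/- In an asymptotic couple (Γ, ψ), there is at most one element β ∈ Γ such that Ψ < β < (Γ^{>0})', where Ψ = ψ(Γ\{0}) and (Γ^{>0})' = {γ + ψ(γ) : γ ∈ Γ, γ > 0}. Moreover, if Ψ has a largest element, then no such β exists. -/
variable {Γ : Type*} [AddCommGroup Γ] [LinearOrder Γ] [IsOrderedAddMonoid Γ]

/-- An asymptotic couple: axioms (AC1), (AC2), (AC3) for `ψ : Γ → Γ`
(only the values of `ψ` at nonzero arguments are constrained). -/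
def IsAsymptoticCouple (ψ : Γ → Γ) : Prop :=
  (∀ α β : Γ, α ≠ 0 → β ≠ 0 → α + β ≠ 0 → min (ψ α) (ψ β) ≤ ψ (α + β)) ∧
  (∀ (α : Γ) (k : ℤ), α ≠ 0 → k ≠ 0 → ψ (k • α) = ψ α) ∧
  (∀ α β : Γ, 0 < α → β ≠ 0 → ψ β < α + ψ α)

/-- Axiom (HC): the couple is of H-type. -/
def IsHType (ψ : Γ → Γ) : Prop := ∀ α β : Γ, 0 < α → α ≤ β → ψ β ≤ ψ α

/-- `i` is an integration operator for `ψ`: the couple has asymptotic integration,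
`i α` being the unique nonzero `β` with `β + ψ β = α`. -/
def IsIntegration (ψ i : Γ → Γ) : Prop :=
  ∀ α : Γ, (i α ≠ 0 ∧ i α + ψ (i α) = α) ∧ ∀ β : Γ, β ≠ 0 → β + ψ β = α → β = i α

/-- `β` is a gap: `Ψ < β < (Γ^{>0})'`. -/
def IsGap (ψ : Γ → Γ) (β : Γ) : Prop :=
  (∀ γ : Γ, γ ≠ 0 → ψ γ < β) ∧ (∀ γ : Γ, 0 < γ → β < γ + ψ γ)

/-- there is at most one gap, and if `Ψ` has a largest element there is no gap. -/
theorem gap_unique (ψ : Γ → Γ) (h : IsAsymptoticCouple ψ) :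
    (∀ β₁ β₂ : Γ, IsGap ψ β₁ → IsGap ψ β₂ → β₁ = β₂) ∧
    ((∃ μ : Γ, (∃ γ : Γ, γ ≠ 0 ∧ ψ γ = μ) ∧ ∀ γ : Γ, γ ≠ 0 → ψ γ ≤ μ) →
      ¬ ∃ β : Γ, IsGap ψ β) := by
  have key : ∀ β₁ β₂ : Γ, IsGap ψ β₁ → IsGap ψ β₂ → β₁ < β₂ → False := by
    intro β₁ β₂ h₁ h₂ hlt
    have hγ : (0:Γ) < β₂ - β₁ := sub_pos.mpr hlt
    have h1 : β₂ < (β₂ - β₁) + ψ (β₂ - β₁) := h₂.2 _ hγ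
    have h2 : ψ (β₂ - β₁) < β₁ := h₁.1 _ (ne_of_gt hγ)
    have : β₂ < β₂ := by
      calc β₂ < (β₂ - β₁) + ψ (β₂ - β₁) := h1
        _ < (β₂ - β₁) + β₁ := by exact add_lt_add_right h2 _
        _ = β₂ := sub_add_cancel β₂ β₁
    exact lt_irrefl _ this
  constructor
  · intro β₁ β₂ h₁ h₂
    rcases lt_trichotomy β₁ β₂ with hlt | heq | hgt
    · exact absurd (key β₁ β₂ h₁ h₂ hlt) (by simp)
    · exact heq
    · exact absurd (key β₂ β₁ h₂ h₁ hgt) (by simp)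
  · rintro ⟨μ, ⟨γ₀, hγ₀, hψγ₀⟩, hmax⟩ ⟨β, hβ⟩
    have hμβ : μ < β := hψγ₀ ▸ hβ.1 γ₀ hγ₀
    have hγ : (0:Γ) < β - μ := sub_pos.mpr hμβ
    have h1 : β < (β - μ) + ψ (β - μ) := hβ.2 _ hγ
    have h2 : ψ (β - μ) ≤ μ := hmax _ (ne_of_gt hγ)
    have : β < β := by
      calc β < (β - μ) + ψ (β - μ) := h1
        _ ≤ (β - μ) + μ := add_le_add_right h2 _
        _ = β := sub_add_cancel β μ
    exact lt_irrefl _ this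
end

section
/- Let (Γ, ψ) be an H-asymptotic couple with asymptotic integration. If α ∈ (Γ^{<0})' (i.e., α = β' for some β < 0), then α < s(α); and if α ∈ (Γ^{>0})', then α > s(α). In particular, for α ∈ Ψ = ψ(Γ\{0}) we have α < s(α), so s(α) < s²(α) < s³(α) < ⋯ is strictly increasing. -/
variable {Γ : Type*} [AddCommGroup Γ] [LinearOrder Γ] [IsOrderedAddMonoid Γ]

/-- if `α ∈ (Γ^{<0})'` then `α < s α`; if `α ∈ (Γ^{>0})'` then `α > s α`;
in particular `α < s α` for `α ∈ Ψ`, and `s α < s² α < s³ α < ⋯` is strictly increasing. -/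
theorem successor_increasing (ψ i : Γ → Γ) (h : IsAsymptoticCouple ψ) (hH : IsHType ψ)
    (hi : IsIntegration ψ i) :
    (∀ α β : Γ, β < 0 → α = β + ψ β → α < ψ (i α)) ∧
    (∀ α β : Γ, 0 < β → α = β + ψ β → ψ (i α) < α) ∧
    (∀ α : Γ, (∃ γ : Γ, γ ≠ 0 ∧ ψ γ = α) → α < ψ (i α)) ∧
    (∀ (α : Γ) (n : ℕ), (fun x => ψ (i x))^[n + 1] α < (fun x => ψ (i x))^[n + 2] α) := by
  obtain ⟨hAC1, hAC2, hAC3⟩ := h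
  have key1 : ∀ α β : Γ, β < 0 → α = β + ψ β → α < ψ (i α) := by
    intro α β hβ hα
    have huniq := (hi α).2 β hβ.ne hα.symm
    subst huniq
    nth_rewrite 1 [hα]
    exact (add_lt_iff_neg_right _).mpr hβ
  have key2 : ∀ α β : Γ, 0 < β → α = β + ψ β → ψ (i α) < α := by
    intro α β hβ hα
    have huniq := (hi α).2 β hβ.ne' hα.symm
    subst huniq
    nth_rewrite 2 [hα]
    exact lt_add_iff_pos_left _ |>.mpr hβ
  have key3 : ∀ α : Γ, (∃ γ : Γ, γ ≠ 0 ∧ ψ γ = α) → α < ψ (i α) := by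
    intro α ⟨γ, hγ, hψγ⟩
    obtain ⟨⟨hne, heq⟩, _⟩ := hi α
    have hneg : i α < 0 := by
      rcases hne.lt_or_gt with hlt | hgt
      · exact hlt
      · have := hAC3 (i α) γ hgt hγ
        rw [heq, hψγ] at this
        exact absurd this (lt_irrefl α)
    exact key1 α (i α) hneg heq.symm
  refine ⟨key1, key2, key3, ?_⟩
  intro α n
  have : ∀ x : Γ, ψ (i x) < ψ (i (ψ (i x))) := by
    intro x
    exact key3 (ψ (i x)) ⟨i x, (hi x).1.1, rfl⟩
  have h2 : (fun x => ψ (i x))^[n + 2] α = (fun x => ψ (i x)) ((fun x => ψ (i x))^[n + 1] α) := by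
    rw [Function.iterate_succ_apply']
  rw [h2]
  have h1 : (fun x => ψ (i x))^[n + 1] α = (fun x => ψ (i x)) ((fun x => ψ (i x))^[n] α) := by
    rw [Function.iterate_succ_apply']
  rw [h1]
  exact this _
end

section
/- Let (Γ, ψ) be a divisible H-asymptotic couple with asymptotic integration. If α, β ∈ Γ satisfy s(α) < s(β), then ψ(β − α) = s(α). -/
variable {Γ : Type*} [AddCommGroup Γ] [LinearOrder Γ] [IsOrderedAddMonoid Γ]

/-- `ψ` is even: `ψ (-x) = ψ x` for nonzero `x`, from (AC2) with `k = -1`. -/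
lemma psi_neg (ψ : Γ → Γ) (h : IsAsymptoticCouple ψ) {x : Γ} (hx : x ≠ 0) :
    ψ (-x) = ψ x := by
  have := h.2.1 x (-1) hx (by norm_num)
  simpa using this

/-- Ultrametric equality: if `ψ x < ψ y` then `ψ (x + y) = ψ x`. -/
lemma psi_add_eq (ψ : Γ → Γ) (h : IsAsymptoticCouple ψ) {x y : Γ} (hx : x ≠ 0) (hy : y ≠ 0)
    (hxy : x + y ≠ 0) (hlt : ψ x < ψ y) : ψ (x + y) = ψ x := by
  have h1 := h.1 x y hx hy hxy
  rw [min_eq_left hlt.le] at h1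
  have h2 := h.1 (x + y) (-y) hxy (neg_ne_zero.mpr hy) (by simpa using hx)
  rw [add_neg_cancel_right, psi_neg ψ h hy] at h2
  have hmin : ψ (x + y) < ψ y := by
    rcases min_lt_iff.mp (lt_of_le_of_lt h2 hlt) with h' | h'
    · exact h'
    · exact absurd h' (lt_irrefl _)
  rw [min_eq_left hmin.le] at h2
  exact le_antisymm h2 h1

/-- Successor Identity: in a divisible H-asymptotic couple with asymptotic
integration, if `s α < s β` then `ψ (β - α) = s α`. -/
theorem successor_identity (ψ i : Γ → Γ) (h : IsAsymptoticCouple ψ) (hH : IsHType ψ)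
    (hi : IsIntegration ψ i) (hdiv : ∀ n : ℕ, 0 < n → ∀ γ : Γ, ∃ δ : Γ, n • δ = γ)
    (α β : Γ) (hs : ψ (i α) < ψ (i β)) :
    ψ (β - α) = ψ (i α) := by
  obtain ⟨⟨ha0, ha⟩, -⟩ := hi α
  obtain ⟨⟨hb0, hb⟩, -⟩ := hi β
  have hε_pos : (0 : Γ) < ψ (i β) - ψ (i α) := sub_pos.mpr hs
  have hε0 : ψ (i β) - ψ (i α) ≠ 0 := ne_of_gt hε_pos
  -- Step 1: `ψ (i α) < ψ (ψ (i β) - ψ (i α))` via (AC3).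
  have hψε : ψ (i α) < ψ (ψ (i β) - ψ (i α)) := by
    by_contra hcon
    push_neg at hcon
    have h3 := h.2.2 (ψ (i β) - ψ (i α)) (i β) hε_pos hb0
    have h4 : ψ (i β) < (ψ (i β) - ψ (i α)) + ψ (i α) :=
      lt_of_lt_of_le h3 (add_le_add_right hcon _)
    simp at h4
  -- `i β - i α ≠ 0` since `ψ (i α) ≠ ψ (i β)`.
  have hba : i β - i α ≠ 0 := by
    intro hcon
    rw [sub_eq_zero] at hcon
    rw [hcon] at hs
    exact lt_irrefl _ hs
  -- `β - α = (i β - i α) + (ψ (i β) - ψ (i α))`.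
  have hkey : β - α = (i β - i α) + (ψ (i β) - ψ (i α)) := by
    have habel : (i β + ψ (i β)) - (i α + ψ (i α))
        = (i β - i α) + (ψ (i β) - ψ (i α)) := by abel
    rw [← habel, ha, hb]
  have hβα : β - α ≠ 0 := by
    intro hcon
    rw [sub_eq_zero] at hcon
    rw [hcon] at hs
    exact lt_irrefl _ hs
  -- Step 2: `ψ (i β - i α) = ψ (i α)`.
  have hna : ψ (-(i α)) = ψ (i α) := psi_neg ψ h ha0
  have h2 : ψ (i β - i α) = ψ (i α) := by
    have := psi_add_eq ψ h (neg_ne_zero.mpr ha0) hb0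
      (by rw [neg_add_eq_sub]; exact hba) (by rw [hna]; exact hs)
    rw [neg_add_eq_sub, hna] at this
    exact this
  -- Step 3: conclude.
  have h3 : ψ ((i β - i α) + (ψ (i β) - ψ (i α))) = ψ (i β - i α) :=
    psi_add_eq ψ h hba hε0 (hkey ▸ hβα) (h2 ▸ hψε)
  rw [hkey, h3, h2]
end

section
/- Let (Γ, ψ) be an H-asymptotic couple with asymptotic integration, contained in an H-asymptotic couple (Γ', ψ') with asymptotic integration. Suppose γ ∈ Ψ' = ψ'(Γ'\{0}) satisfies Ψ < γ (γ is larger than every element of Ψ = ψ(Γ\{0})). Then s(α) = ψ'(α − γ) for all α ∈ Γ. -/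
variable {Γ : Type*} [AddCommGroup Γ] [LinearOrder Γ] [IsOrderedAddMonoid Γ]

/-- AC2 specialized to doubling (negated). -/
lemma psi_neg_two (ψ : Γ → Γ) (h : IsAsymptoticCouple ψ) {x : Γ} (hx : x ≠ 0) :
    ψ (-(x + x)) = ψ x := by
  have := h.2.1 x (-2) hx (by norm_num)
  have e : (-2 : ℤ) • x = -(x + x) := by
    rw [neg_smul, two_zsmul]
  rw [e] at this
  exact this

/-- if `(Γ', ψ')` extends `(Γ, ψ)` (via the embedding `f`), both H-asymptotic
couples with asymptotic integration, and `γ ∈ Ψ'` satisfies `Ψ < γ`, then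
`s(α) = ψ'(α - γ)` for all `α ∈ Γ`. -/
theorem s_eq_psi_sub_gap {Γ' : Type*} [AddCommGroup Γ'] [LinearOrder Γ'] [IsOrderedAddMonoid Γ']
    (ψ i : Γ → Γ) (ψ' i' : Γ' → Γ')
    (h : IsAsymptoticCouple ψ) (hH : IsHType ψ) (hi : IsIntegration ψ i)
    (h' : IsAsymptoticCouple ψ') (hH' : IsHType ψ') (hi' : IsIntegration ψ' i')
    (f : Γ →+ Γ') (hf : StrictMono f)
    (hcompat : ∀ γ : Γ, γ ≠ 0 → ψ' (f γ) = f (ψ γ))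
    (γ : Γ') (hγΨ : ∃ δ : Γ', δ ≠ 0 ∧ ψ' δ = γ)
    (hbig : ∀ δ : Γ, δ ≠ 0 → f (ψ δ) < γ) :
    ∀ α : Γ, f (ψ (i α)) = ψ' (f α - γ) := by
  obtain ⟨δ, hδne, hδψ⟩ := hγΨ
  intro α
  obtain ⟨⟨hβne, hβeq⟩, -⟩ := hi α
  set β := i α with hβdef
  set μ := ψ β with hμdef
  -- Step 1 : Ψ has no maximum: produce ν > 0 with ψ ν = μ + ν (> μ).
  obtain ⟨⟨hθ₁ne, hθ₁eq⟩, -⟩ := hi μ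
  set θ₁ := i μ with hθ₁def
  have hθ₁neg : θ₁ < 0 := by
    rcases hθ₁ne.lt_or_gt with hlt | hgt
    · exact hlt
    · have := h.2.2 θ₁ β hgt hβne
      rw [hθ₁eq] at this
      exact absurd this (lt_irrefl μ)
  set ν := -θ₁ with hνdef
  have hνpos : 0 < ν := neg_pos.mpr hθ₁neg
  have hνne : ν ≠ 0 := ne_of_gt hνpos
  have hψν : ψ ν = μ + ν := by
    have h0 : ψ ν = ψ θ₁ := psi_neg ψ h hθ₁ne
    rw [h0, hνdef, ← sub_eq_add_neg]
    exact eq_sub_of_add_eq' hθ₁eq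
  -- Step 2 : θ := ∫(ψ ν) is negative.
  obtain ⟨⟨hθne, hθeq⟩, -⟩ := hi (ψ ν)
  set θ := i (ψ ν) with hθdef
  have hθneg : θ < 0 := by
    rcases hθne.lt_or_gt with hlt | hgt
    · exact hlt
    · have := h.2.2 θ ν hgt hνne
      rw [hθeq] at this
      exact absurd this (lt_irrefl (ψ ν))
  have hψθ : ψ θ = μ + ν - θ := by
    have h0 : θ + ψ θ = μ + ν := by rw [hθeq, hψν]
    exact eq_sub_of_add_eq' h0
  -- Step 3 : 0 < γ - f μ ≤ f (ν - (θ + θ)).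
  have hfμγ : f μ < γ := by
    have := hbig β hβne
    rw [← hμdef] at this
    exact this
  have hcpos : 0 < γ - f μ := sub_pos.mpr hfμγ
  have hγlt : γ < f (ν - (θ + θ)) + f μ := by
    have hfθpos : 0 < f (-θ) := by
      have := hf (neg_pos.mpr hθneg)
      simpa using this
    have h3 := h'.2.2 (f (-θ)) δ hfθpos hδne
    rw [hδψ] at h3
    have hcomp : ψ' (f (-θ)) = f (ψ (-θ)) := hcompat _ (neg_ne_zero.mpr hθne)
    rw [hcomp, psi_neg ψ h hθne, ← map_add] at h3
    have harg : -θ + ψ θ = (ν - (θ + θ)) + μ := by rw [hψθ]; abel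
    rw [harg, map_add] at h3
    exact h3
  have hkey_arg_pos : 0 < ν - (θ + θ) :=
    sub_pos.mpr (lt_trans (add_neg hθneg hθneg) hνpos)
  have hkey_le : γ - f μ ≤ f (ν - (θ + θ)) := sub_le_iff_le_add.mpr hγlt.le
  -- Step 4 : μ < ψ (ν - (θ + θ)).
  have hψθbig : μ < ψ θ := by
    rw [hψθ, add_sub_assoc]
    exact lt_add_of_pos_right μ (sub_pos.mpr (hθneg.trans hνpos))
  have hψνbig : μ < ψ ν := by
    rw [hψν]; exact lt_add_of_pos_right μ hνpos
  have hψsum : μ < ψ (ν - (θ + θ)) := by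
    have hne2 : -(θ + θ) ≠ 0 := neg_ne_zero.mpr (ne_of_lt (add_neg hθneg hθneg))
    have h1 := h.1 ν (-(θ + θ)) hνne hne2
      (by rw [← sub_eq_add_neg]; exact ne_of_gt hkey_arg_pos)
    rw [psi_neg_two ψ h hθne, ← sub_eq_add_neg] at h1
    exact lt_of_lt_of_le (lt_min hψνbig hψθbig) h1
  -- Step 5 : f μ < ψ' (γ - f μ).
  have hkey : f μ < ψ' (γ - f μ) := by
    have hHle := hH' (γ - f μ) (f (ν - (θ + θ))) hcpos hkey_le
    have hcomp : ψ' (f (ν - (θ + θ))) = f (ψ (ν - (θ + θ))) :=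
      hcompat _ (ne_of_gt hkey_arg_pos)
    rw [hcomp] at hHle
    exact lt_of_lt_of_le (hf hψsum) hHle
  -- Set ε := f μ - γ; ψ' ε = ψ' (γ - f μ) > f μ.
  set ε := f μ - γ with hεdef
  have hεne : ε ≠ 0 := sub_ne_zero.mpr (ne_of_lt hfμγ)
  have hψε : f μ < ψ' ε := by
    have h0 : ψ' ε = ψ' (γ - f μ) := by
      rw [hεdef, ← neg_sub γ (f μ), psi_neg ψ' h' (ne_of_gt hcpos)]
    rw [h0]; exact hkey
  -- f β ≠ 0 and ψ'(f β) = f μ.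
  have hfβne : f β ≠ 0 := by
    intro hh; apply hβne; exact hf.injective (by simpa using hh)
  have hψfβ : ψ' (f β) = f μ := hcompat β hβne
  -- f α - γ = f β + ε and it is nonzero.
  have hsplit : f α - γ = f β + ε := by
    rw [hεdef, ← hβeq, map_add]; abel
  have hXne : f β + ε ≠ 0 := by
    intro hh
    have hεeq : ε = -(f β) := by
      rw [eq_neg_iff_add_eq_zero, add_comm]; exact hh
    have h0 : ψ' ε = f μ := by
      rw [hεeq, ← map_neg, hcompat (-β) (neg_ne_zero.mpr hβne), psi_neg ψ h hβne]
    rw [h0] at hψε; exact absurd hψε (lt_irrefl _)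
  -- AC1 both ways gives ψ'(f β + ε) = ψ'(f β).
  have hge : ψ' (f β) ≤ ψ' (f β + ε) := by
    have h1 := h'.1 (f β) ε hfβne hεne hXne
    have h0 : min (ψ' (f β)) (ψ' ε) = ψ' (f β) :=
      min_eq_left (le_of_lt (by rw [hψfβ]; exact hψε))
    rw [h0] at h1; exact h1
  have hle : ψ' (f β + ε) ≤ ψ' (f β) := by
    have hne' : -ε ≠ 0 := neg_ne_zero.mpr hεne
    have h1 := h'.1 (f β + ε) (-ε) hXne hne' (by simpa using hfβne)
    rw [add_neg_cancel_right] at h1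
    have hψnegε : ψ' (-ε) = ψ' ε := psi_neg ψ' h' hεne
    rcases min_le_iff.mp h1 with h2 | h2
    · exact h2
    · rw [hψnegε, hψfβ] at h2
      exact absurd (lt_of_lt_of_le hψε h2) (lt_irrefl _)
  rw [hsplit, ← hψfβ]
  exact le_antisymm hge hle
end

section
/- Let (Γ, ψ) be an H-asymptotic couple with asymptotic integration. For α, β ∈ Γ: β = ψ(α − β) if and only if β = s(α). -/
variable {Γ : Type*} [AddCommGroup Γ] [LinearOrder Γ] [IsOrderedAddMonoid Γ]

/-- Fixed Point Identity: `β = ψ(α - β)` iff `β = s(α)`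
(the convention `ψ(0) = ∞` forces `α ≠ β` on the left). -/
theorem fixed_point_identity (ψ i : Γ → Γ) (h : IsAsymptoticCouple ψ) (hH : IsHType ψ)
    (hi : IsIntegration ψ i) (α β : Γ) :
    (α ≠ β ∧ β = ψ (α - β)) ↔ β = ψ (i α) := by
  obtain ⟨⟨hne, heq⟩, huniq⟩ := hi α
  constructor
  · rintro ⟨hab, hb⟩
    have h1 : α - β ≠ 0 := sub_ne_zero.mpr hab
    have h2 : (α - β) + ψ (α - β) = α := by rw [← hb]; abel
    rw [hb, huniq (α - β) h1 h2]
  · rintro rfl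
    have : α - ψ (i α) = i α := ((eq_sub_of_add_eq heq).symm)
    constructor
    · intro hc
      apply hne
      rw [← this, ← hc, sub_self]
    · rw [this]
end

section
/- Let (Γ, ψ) be an H-asymptotic couple with asymptotic integration. Then s(0) ≠ 0, and s(0) is the unique element x ∈ Γ\{0} with ψ(x) = x. -/
variable {Γ : Type*} [AddCommGroup Γ] [LinearOrder Γ] [IsOrderedAddMonoid Γ]

/-- `s 0 ≠ 0`, and `s 0` is the unique nonzero `x` with `ψ x = x`. -/
theorem s_zero_unique_fixed_point (ψ i : Γ → Γ) (h : IsAsymptoticCouple ψ) (hH : IsHType ψ)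
    (hi : IsIntegration ψ i) :
    ψ (i 0) ≠ 0 ∧ ∀ x : Γ, x ≠ 0 → (ψ x = x ↔ x = ψ (i 0)) := by
  obtain ⟨⟨hne, heq⟩, huniq⟩ := hi 0
  have hpsi : ψ (i 0) = -(i 0) := eq_neg_of_add_eq_zero_right heq
  have hneg : ∀ y : Γ, y ≠ 0 → ψ (-y) = ψ y := by
    intro y hy
    have := h.2.1 y (-1) hy (by norm_num)
    simpa using this
  refine ⟨by simp [hpsi, hne], fun x hx => ⟨fun hfix => ?_, fun hx0 => ?_⟩⟩
  · have h1 : (-x) + ψ (-x) = 0 := by rw [hneg x hx, hfix, neg_add_cancel]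
    have := huniq (-x) (neg_ne_zero.mpr hx) h1
    rw [hpsi, ← this, neg_neg]
  · rw [hx0, hpsi, hneg _ hne, hpsi]
end

section
/- Let (Γ, ψ) be a divisible H-asymptotic couple with asymptotic integration. For α ∈ Γ, let γ₀ := s²(α) and δ₀ := s²(α) − ∫s(α). Then γ₀ ∈ Ψ, δ₀ ∈ (Γ^{>0})', and the map γ ↦ ψ(γ − α) takes the constant value s(α) on the interval [γ₀, δ₀] = {γ ∈ Γ : γ₀ ≤ γ ≤ δ₀}. -/
variable {Γ : Type*} [AddCommGroup Γ] [LinearOrder Γ] [IsOrderedAddMonoid Γ]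

/-- Limit Lemma: with `γ₀ := s²α` and `δ₀ := s²α - ∫ s α`, one has `γ₀ ∈ Ψ`,
`δ₀ ∈ (Γ^{>0})'`, and `γ ↦ ψ(γ - α)` is constant with value `s α` on `[γ₀, δ₀]`. -/
theorem limit_lemma (ψ i : Γ → Γ) (h : IsAsymptoticCouple ψ) (hH : IsHType ψ)
    (hi : IsIntegration ψ i) (hdiv : ∀ n : ℕ, 0 < n → ∀ γ : Γ, ∃ δ : Γ, n • δ = γ)
    (α : Γ) :
    (∃ γ : Γ, γ ≠ 0 ∧ ψ γ = ψ (i (ψ (i α)))) ∧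
    (∃ γ : Γ, 0 < γ ∧ γ + ψ γ = ψ (i (ψ (i α))) - i (ψ (i α))) ∧
    (∀ γ : Γ, ψ (i (ψ (i α))) ≤ γ → γ ≤ ψ (i (ψ (i α))) - i (ψ (i α)) →
      ψ (γ - α) = ψ (i α)) := by
  obtain ⟨h1, h2, h3⟩ := h
  have hneg : ∀ x : Γ, x ≠ 0 → ψ (-x) = ψ x := by
    intro x hx
    have := h2 x (-1) hx (by norm_num)
    simpa using this
  obtain ⟨⟨hβ0, hβ⟩, -⟩ := hi α
  obtain ⟨⟨hβ₂0, hβ₂⟩, -⟩ := hi (ψ (i α))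
  set β : Γ := i α with hβdef
  set β₂ : Γ := i (ψ β) with hβ₂def
  -- β₂ < 0
  have hβ₂neg : β₂ < 0 := by
    rcases lt_trichotomy β₂ 0 with h' | h' | h'
    · exact h'
    · exact absurd h' hβ₂0
    · have := h3 β₂ β h' hβ0
      rw [hβ₂] at this
      exact absurd this (lt_irrefl _)
  have hβ₂pos : 0 < -β₂ := neg_pos.mpr hβ₂neg
  refine ⟨⟨β₂, hβ₂0, rfl⟩, ⟨-β₂, hβ₂pos, by rw [hneg β₂ hβ₂0]; abel⟩, ?_⟩
  intro γ hγ1 hγ2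
  set δ : Γ := γ - ψ β with hδdef
  have hδlb : -β₂ ≤ δ := by
    have h' := sub_le_sub_right hγ1 (ψ β)
    have e : ψ β₂ - ψ β = -β₂ := by rw [← hβ₂]; abel
    rw [e] at h'
    exact h'
  have hδub : δ ≤ -β₂ + -β₂ := by
    have h' := sub_le_sub_right hγ2 (ψ β)
    have e : ψ β₂ - β₂ - ψ β = -β₂ + -β₂ := by rw [← hβ₂]; abel
    rw [e] at h'
    exact h'
  have hδpos : 0 < δ := lt_of_lt_of_le hβ₂pos hδlb
  have hδ0 : δ ≠ 0 := ne_of_gt hδpos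
  -- ψ δ = ψ β₂
  have hψδ : ψ δ = ψ β₂ := by
    have hle1 : ψ δ ≤ ψ (-β₂) := hH (-β₂) δ hβ₂pos hδlb
    have hle2 : ψ (-β₂ + -β₂) ≤ ψ δ := hH δ (-β₂ + -β₂) hδpos hδub
    have h22 : ψ (-β₂ + -β₂) = ψ β₂ := by
      have := h2 β₂ (-2) hβ₂0 (by norm_num)
      have e : (-2 : ℤ) • β₂ = -β₂ + -β₂ := by
        rw [show ((-2 : ℤ)) = -(2 : ℤ) by norm_num, neg_zsmul, two_zsmul]
        abel
      rw [e] at this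
      exact this
    rw [hneg β₂ hβ₂0] at hle1
    rw [h22] at hle2
    exact le_antisymm hle1 hle2
  -- ψ β₂ > ψ β
  have hgt : ψ β < ψ β₂ := by
    rw [← hβ₂]
    calc β₂ + ψ β₂ < 0 + ψ β₂ := add_lt_add_left hβ₂neg _
      _ = ψ β₂ := zero_add _
  have hψδβ : ψ β < ψ δ := by rw [hψδ]; exact hgt
  -- δ ≠ β
  have hδβ : δ - β ≠ 0 := by
    intro hc
    have : δ = β := sub_eq_zero.mp hc
    rw [this] at hψδβ
    exact absurd hψδβ (lt_irrefl _)
  -- γ - α = δ - β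
  have hγα : γ - α = δ - β := by
    rw [hδdef, ← hβ]; abel
  rw [hγα]
  -- lower bound: ψ β ≤ ψ (δ - β)
  have hlow : ψ β ≤ ψ (δ - β) := by
    have := h1 δ (-β) hδ0 (neg_ne_zero.mpr hβ0) (by rw [← sub_eq_add_neg]; exact hδβ)
    rw [← sub_eq_add_neg, hneg β hβ0] at this
    calc ψ β = min (ψ δ) (ψ β) := (min_eq_right (le_of_lt hψδβ)).symm
      _ ≤ ψ (δ - β) := this
  -- upper bound: ψ (δ - β) ≤ ψ β
  have hhigh : ψ (δ - β) ≤ ψ β := by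
    have hsum : (δ - β) + (-δ) = -β := by abel
    have := h1 (δ - β) (-δ) hδβ (neg_ne_zero.mpr hδ0)
      (by rw [hsum]; exact neg_ne_zero.mpr hβ0)
    rw [hsum, hneg β hβ0, hneg δ hδ0] at this
    rcases min_le_iff.mp this with h' | h'
    · exact h'
    · exact absurd h' (not_le.mpr hψδβ)
  exact le_antisymm hhigh hlow
end

section
/- The asymptotic couple (Γ_log^Q, ψ) has asymptotic integration: for every α ∈ Γ_log^Q there is a unique nonzero β ∈ Γ_log^Q with β + ψ(β) = α. Explicitly, writing α = (r₀, r₁, r₂, …), take the least n with r_n ≠ 1; then β = (0,…,0, r_n − 1, r_{n+1}, …) (with n zeros). -/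
open Finsupp

/-- The underlying ordered abelian group of `Γ_log^ℚ`: `⊕_{n∈ℕ} ℚ·e_n` with the
lexicographic order (a nonzero element is positive iff its first nonzero coordinate is). -/
abbrev GammaLogQ : Type := Lex (ℕ →₀ ℚ)

/-- The map `ψ` of `Γ_log^ℚ`: for nonzero `α` whose first nonzero coordinate is the `n`-th,
`ψ(α) = e_0 + e_1 + ⋯ + e_n`. -/
noncomputable def psiLog (α : GammaLogQ) : GammaLogQ :=
  if h : ofLex α = 0 then 0
  else toLex (∑ k ∈ Finset.range
    ((ofLex α).support.min' (Finsupp.support_nonempty_iff.mpr h) + 1), Finsupp.single k 1)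

lemma Sval (n m : ℕ) :
    (∑ k ∈ Finset.range (n + 1), Finsupp.single k (1:ℚ)) m = if m ≤ n then 1 else 0 := by
  rw [Finsupp.finset_sum_apply]
  simp [Finsupp.single_apply, Nat.lt_succ_iff]

lemma key (α : GammaLogQ) (n : ℕ) (hn : ofLex α n ≠ 1) (hm : ∀ m < n, ofLex α m = 1) :
    (α - toLex (∑ k ∈ Finset.range (n + 1), Finsupp.single k 1) ≠ 0 ∧
     (α - toLex (∑ k ∈ Finset.range (n + 1), Finsupp.single k 1)) +
       psiLog (α - toLex (∑ k ∈ Finset.range (n + 1), Finsupp.single k 1)) = α) := by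
  set S : ℕ →₀ ℚ := ∑ k ∈ Finset.range (n + 1), Finsupp.single k 1 with hS
  set β : GammaLogQ := α - toLex S with hβdef
  have hβap : ∀ m, ofLex β m = ofLex α m - S m := fun m => rfl
  have hβn : ofLex β n ≠ 0 := by
    rw [hβap, Sval]
    simp only [le_refl, if_true]
    exact sub_ne_zero.mpr hn
  have hβ0 : ofLex β ≠ 0 := fun h => hβn (by rw [h]; rfl)
  have hβne : β ≠ 0 := fun h => hβ0 (by rw [h]; rfl)
  have hmem : n ∈ (ofLex β).support := Finsupp.mem_support_iff.mpr hβn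
  have hmin : (ofLex β).support.min' (Finsupp.support_nonempty_iff.mpr hβ0) = n := by
    refine le_antisymm (Finset.min'_le _ _ hmem) (Finset.le_min' _ _ _ ?_)
    intro y hy
    by_contra h
    push_neg at h
    have : ofLex β y = 0 := by
      rw [hβap, Sval, if_pos (le_of_lt h), hm y h]; ring
    exact Finsupp.mem_support_iff.mp hy this
  have hpsi : psiLog β = toLex S := by
    rw [psiLog, dif_neg hβ0, hmin]
  refine ⟨hβne, ?_⟩
  rw [hpsi, hβdef, sub_add_cancel]

lemma inv (β : GammaLogQ) (hβ : β ≠ 0) :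
    ∃ n, ofLex (β + psiLog β) n ≠ 1 ∧ (∀ m < n, ofLex (β + psiLog β) m = 1) ∧
      β = (β + psiLog β) - toLex (∑ k ∈ Finset.range (n + 1), Finsupp.single k 1) := by
  have hβ0 : ofLex β ≠ 0 := fun h => hβ (by rw [← toLex_ofLex β, h]; rfl)
  set n := (ofLex β).support.min' (Finsupp.support_nonempty_iff.mpr hβ0) with hn
  have hpsi : psiLog β = toLex (∑ k ∈ Finset.range (n + 1), Finsupp.single k 1) := by
    rw [psiLog, dif_neg hβ0]
  have hap : ∀ m, ofLex (β + psiLog β) m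
      = ofLex β m + (if m ≤ n then 1 else 0) := by
    intro m
    rw [hpsi]
    show ofLex β m + (∑ k ∈ Finset.range (n + 1), Finsupp.single k (1:ℚ)) m = _
    rw [Sval]
  have hmemn : ofLex β n ≠ 0 :=
    Finsupp.mem_support_iff.mp (Finset.min'_mem _ _)
  refine ⟨n, ?_, ?_, ?_⟩
  · rw [hap, if_pos le_rfl]
    intro h
    exact hmemn (by linarith [h])
  · intro m hmlt
    have : ofLex β m = 0 := by
      by_contra h
      have := Finset.min'_le (ofLex β).support m (Finsupp.mem_support_iff.mpr h)
      omega
    rw [hap, if_pos (le_of_lt hmlt), this, zero_add]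
  · rw [hpsi, add_sub_cancel_right]

/-- `(Γ_log^ℚ, ψ)` has asymptotic integration: every `α` has a unique nonzero
`β` with `β + ψ(β) = α`; explicitly, if `n` is least with the `n`-th coordinate of `α` not
equal to `1`, then `β = α - (e_0 + ⋯ + e_n)`. -/
theorem gammaLogQ_asymptotic_integration :
    (∀ α : GammaLogQ, ∃! β : GammaLogQ, β ≠ 0 ∧ β + psiLog β = α) ∧
    (∀ (α : GammaLogQ) (n : ℕ), ofLex α n ≠ 1 → (∀ m < n, ofLex α m = 1) →
      (α - toLex (∑ k ∈ Finset.range (n + 1), Finsupp.single k 1) ≠ 0 ∧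
       (α - toLex (∑ k ∈ Finset.range (n + 1), Finsupp.single k 1)) +
         psiLog (α - toLex (∑ k ∈ Finset.range (n + 1), Finsupp.single k 1)) = α)) := by
  constructor
  · intro α
    -- existence: least n with α n ≠ 1
    have hex : ∃ k, ofLex α k ≠ 1 := by
      obtain ⟨k, hk⟩ := Infinite.exists_notMem_finset (ofLex α).support
      exact ⟨k, by rw [Finsupp.notMem_support_iff.mp hk]; norm_num⟩
    classical
    set n := Nat.find hex with hn
    have h1 : ofLex α n ≠ 1 := Nat.find_spec hex
    have h2 : ∀ m < n, ofLex α m = 1 := fun m hm => by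
      have := Nat.find_min hex hm; push_neg at this; exact this
    obtain ⟨hne, heq⟩ := key α n h1 h2
    refine ⟨_, ⟨hne, heq⟩, ?_⟩
    intro γ ⟨hγne, hγeq⟩
    obtain ⟨n', h1', h2', h3'⟩ := inv γ hγne
    rw [hγeq] at h1' h2' h3'
    have hnn : n' = n := by
      rcases lt_trichotomy n' n with h | h | h
      · exact absurd (h2 n' h) h1'
      · exact h
      · exact absurd (h2' n h) h1
    rw [h3', hnn]
  · intro α n h1 h2
    exact key α n h1 h2
end

section
/- Let (Γ, ψ) be a model of T_log. Let n ≥ 1, α₁ < ⋯ < α_n in Ψ, q₁, …, q_n ∈ ℚ\{0}, and α = q₁α₁ + ⋯ + q_nα_n. Then: (1) if q₁ + ⋯ + q_n = 0 then ψ(α) = s(α₁); (2) if q₁ + ⋯ + q_n ≠ 0 then ψ(α) = s(0). -/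
variable {Γ : Type*} [AddCommGroup Γ] [LinearOrder Γ] [IsOrderedAddMonoid Γ] [Module ℚ Γ]

/-- `(Γ, ψ)` (with integration operator `i`, successor `s := ψ ∘ i`) is a model of `T_log`:
a divisible H-asymptotic couple with asymptotic integration such that
`s 0 = min Ψ > 0` and for all `α < β` in `Ψ`, `s α ≤ β` (so `Ψ` is a successor set,
`s α` being the immediate successor of `α` in `Ψ`). -/
def IsTlogModel (ψ i : Γ → Γ) : Prop :=
  IsAsymptoticCouple ψ ∧ IsHType ψ ∧ IsIntegration ψ i ∧
  0 < ψ (i 0) ∧ (∀ γ : Γ, γ ≠ 0 → ψ (i 0) ≤ ψ γ) ∧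
  (∀ α β : Γ, (∃ γ : Γ, γ ≠ 0 ∧ ψ γ = α) → (∃ γ : Γ, γ ≠ 0 ∧ ψ γ = β) → α < β →
    ψ (i α) ≤ β)

set_option linter.unusedSectionVars false

section Aux
variable {ψ i : Γ → Γ}

lemma qsmul_ne_zero' {q : ℚ} {γ : Γ} (hq : q ≠ 0) (hγ : γ ≠ 0) : q • γ ≠ 0 := by
  intro h0
  apply hγ
  have := congrArg (fun x => q⁻¹ • x) h0
  simpa [smul_smul, inv_mul_cancel₀ hq] using this

lemma psi_neg_s13 (hAC : IsAsymptoticCouple ψ) {γ : Γ} (hγ : γ ≠ 0) : ψ (-γ) = ψ γ := by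
  have := hAC.2.1 γ (-1) hγ (by norm_num)
  simpa using this

lemma psi_qsmul (hAC : IsAsymptoticCouple ψ) {γ : Γ} (hγ : γ ≠ 0) {q : ℚ} (hq : q ≠ 0) :
    ψ (q • γ) = ψ γ := by
  have hqγ : q • γ ≠ 0 := qsmul_ne_zero' hq hγ
  have hden : ((q.den : ℤ)) ≠ 0 := by exact_mod_cast q.den_ne_zero
  have h1 := hAC.2.1 (q • γ) (q.den : ℤ) hqγ hden
  have h2 := hAC.2.1 γ q.num hγ (Rat.num_ne_zero.mpr hq)
  have key : ((q.den : ℚ)) * q = (q.num : ℚ) := by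
    rw [mul_comm]
    exact_mod_cast Rat.mul_den_eq_num q
  have h3 : ((q.den : ℤ)) • (q • γ) = (q.num : ℤ) • γ := by
    rw [← Int.cast_smul_eq_zsmul ℚ, ← Int.cast_smul_eq_zsmul ℚ, smul_smul]
    push_cast
    rw [key]
  rw [h3, h2] at h1
  exact h1.symm

lemma psi_add (hAC : IsAsymptoticCouple ψ) {γ δ : Γ} (hγ : γ ≠ 0) (hδ : δ ≠ 0)
    (hlt : ψ γ < ψ δ) : ψ (γ + δ) = ψ γ := by
  have hne : γ + δ ≠ 0 := by
    intro h0
    have : δ = -γ := eq_neg_of_add_eq_zero_right h0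
    rw [this, psi_neg_s13 hAC hγ] at hlt
    exact lt_irrefl _ hlt
  have h1 := hAC.1 γ δ hγ hδ hne
  have h2 := hAC.1 (γ + δ) (-δ) hne (neg_ne_zero.mpr hδ) (by simpa using hγ)
  rw [add_neg_cancel_right, psi_neg_s13 hAC hδ] at h2
  have h2' : ψ (γ + δ) ≤ ψ γ := by
    rcases le_or_gt (ψ (γ + δ)) (ψ δ) with hc | hc
    · rwa [min_eq_left hc] at h2
    · rw [min_eq_right hc.le] at h2
      exact absurd (lt_of_lt_of_le hlt h2) (lt_irrefl _)
  exact le_antisymm h2' (le_trans (le_min le_rfl hlt.le) h1)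

lemma psi_sum_ge (hAC : IsAsymptoticCouple ψ) {ι : Type*} (s : Finset ι) (f : ι → Γ) (c : Γ)
    (hf : ∀ j ∈ s, f j ≠ 0 → c ≤ ψ (f j)) (hsum : (∑ j ∈ s, f j) ≠ 0) :
    c ≤ ψ (∑ j ∈ s, f j) := by
  classical
  induction s using Finset.induction with
  | empty => simp at hsum
  | @insert a s ha ih =>
    rw [Finset.sum_insert ha] at hsum ⊢
    by_cases h0 : f a = 0
    · rw [h0, zero_add] at hsum ⊢
      exact ih (fun j hj => hf j (Finset.mem_insert_of_mem hj)) hsum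
    by_cases hs : (∑ j ∈ s, f j) = 0
    · rw [hs, add_zero] at hsum ⊢
      exact hf a (Finset.mem_insert_self a s) h0
    have h1 := hAC.1 (f a) _ h0 hs hsum
    have h2 := ih (fun j hj => hf j (Finset.mem_insert_of_mem hj)) hs
    have h3 := hf a (Finset.mem_insert_self a s) h0
    exact le_trans (le_min h3 h2) h1

lemma int_neg (hAC : IsAsymptoticCouple ψ) (hI : IsIntegration ψ i) {b : Γ}
    (hb : ∃ γ : Γ, γ ≠ 0 ∧ ψ γ = b) : i b < 0 := by
  obtain ⟨γ, hγ, hγb⟩ := hb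
  have h1 := (hI b).1.1
  have h2 := (hI b).1.2
  rcases lt_trichotomy (i b) 0 with h | h | h
  · exact h
  · exact absurd h h1
  · have := hAC.2.2 (i b) γ h hγ
    rw [hγb, h2] at this
    exact absurd this (lt_irrefl _)

lemma lt_s (hAC : IsAsymptoticCouple ψ) (hI : IsIntegration ψ i) {b : Γ}
    (hb : ∃ γ : Γ, γ ≠ 0 ∧ ψ γ = b) : b < ψ (i b) := by
  have h2 := (hI b).1.2
  have h3 := int_neg hAC hI hb
  have hspos : ψ (i b) = b - i b := eq_sub_of_add_eq' h2
  rw [hspos, lt_sub_iff_add_lt, add_lt_iff_neg_left]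
  exact h3

lemma psi_sub (hAC : IsAsymptoticCouple ψ) (hH : IsHType ψ) (hI : IsIntegration ψ i)
    (hsucc : ∀ α β : Γ, (∃ γ : Γ, γ ≠ 0 ∧ ψ γ = α) → (∃ γ : Γ, γ ≠ 0 ∧ ψ γ = β) → α < β →
      ψ (i α) ≤ β)
    {x y : Γ} (hx : ∃ γ : Γ, γ ≠ 0 ∧ ψ γ = x) (hy : ∃ γ : Γ, γ ≠ 0 ∧ ψ γ = y)
    (hxy : x < y) : ψ (y - x) = ψ (i x) := by
  have hix := (hI x).1.2
  have hixneg := int_neg hAC hI hx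
  have hne : y - x ≠ 0 := sub_ne_zero.mpr hxy.ne'
  have hspos : ψ (i x) = x - i x := eq_sub_of_add_eq' hix
  have hsle : ψ (i x) ≤ y := hsucc x y hx hy hxy
  -- upper bound
  have hub : ψ (y - x) ≤ ψ (i x) := by
    have h1 : (0:Γ) < -(i x) := neg_pos.mpr hixneg
    have h2 : -(i x) ≤ y - x := by
      rw [le_sub_iff_add_le]
      rw [hspos, sub_eq_neg_add] at hsle
      exact hsle
    have := hH (-(i x)) (y - x) h1 h2
    rwa [psi_neg_s13 hAC (hI x).1.1] at this
  -- lower bound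
  obtain ⟨γy, hγy, hγyy⟩ := hy
  have h3 := hAC.2.2 (y - x) γy (sub_pos.mpr hxy) hγy
  rw [hγyy, ← sub_lt_iff_lt_add', sub_sub_cancel] at h3
  have hlb : ψ (i x) ≤ ψ (y - x) := hsucc x (ψ (y - x)) hx ⟨y - x, hne, rfl⟩ h3
  exact le_antisymm hub hlb

lemma psi_Psi (hAC : IsAsymptoticCouple ψ) (hH : IsHType ψ) (hI : IsIntegration ψ i)
    (hs0 : 0 < ψ (i 0)) (hmin : ∀ γ : Γ, γ ≠ 0 → ψ (i 0) ≤ ψ γ)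
    {x : Γ} (hx : ∃ γ : Γ, γ ≠ 0 ∧ ψ γ = x) : ψ x = ψ (i 0) := by
  obtain ⟨γ, hγ, hγx⟩ := hx
  have hge : ψ (i 0) ≤ x := hγx ▸ hmin γ hγ
  have hxpos : 0 < x := lt_of_lt_of_le hs0 hge
  have hi0 : i 0 + ψ (i 0) = 0 := (hI 0).1.2
  have hpsis0 : ψ (ψ (i 0)) = ψ (i 0) := by
    have h : ψ (i 0) = -(i 0) := eq_neg_of_add_eq_zero_right hi0
    conv_lhs => rw [h]
    exact psi_neg_s13 hAC (hI 0).1.1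
  have hub : ψ x ≤ ψ (i 0) := by
    have := hH (ψ (i 0)) x hs0 hge
    rwa [hpsis0] at this
  exact le_antisymm hub (hmin x (ne_of_gt hxpos))

end Aux

/-- for `α₁ < ⋯ < α_n` in `Ψ` and nonzero rationals `q_j`, with
`α = Σ q_j α_j`: if `Σ q_j = 0` then `ψ α = s α₁`, and if `Σ q_j ≠ 0` then `ψ α = s 0`. -/
theorem psi_of_rational_combination (ψ i : Γ → Γ) (h : IsTlogModel ψ i)
    (n : ℕ) (hn : 0 < n) (a : Fin n → Γ) (hmono : StrictMono a)
    (haΨ : ∀ j, ∃ γ : Γ, γ ≠ 0 ∧ ψ γ = a j)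
    (q : Fin n → ℚ) (hq : ∀ j, q j ≠ 0) :
    ((∑ j, q j) = 0 → ψ (∑ j, q j • a j) = ψ (i (a ⟨0, hn⟩))) ∧
    ((∑ j, q j) ≠ 0 → ψ (∑ j, q j • a j) = ψ (i 0)) := by
  classical
  obtain ⟨hAC, hH, hI, hs0, hmin, hsucc⟩ := h
  set z : Fin n := ⟨0, hn⟩ with hz
  have haz_ne : ∀ j, a j ≠ 0 := by
    intro j
    obtain ⟨γ, hγ, hγa⟩ := haΨ j
    have : (0:Γ) < a j := lt_of_lt_of_le hs0 (hγa ▸ hmin γ hγ)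
    exact this.ne'
  have decomp : ∀ b : Γ, (∑ j, q j • a j) = (∑ j, q j) • b + ∑ j, q j • (a j - b) := by
    intro b
    rw [Finset.sum_smul, ← Finset.sum_add_distrib]
    apply Finset.sum_congr rfl
    intro j _
    rw [smul_sub]
    abel
  constructor
  · -- case Σ q = 0
    intro hQ
    have h1n : 1 < n := by
      by_contra hle
      push_neg at hle
      have hn1 : n = 1 := by omega
      subst hn1
      rw [Fin.sum_univ_one] at hQ
      exact hq 0 hQ
    set o : Fin n := ⟨1, h1n⟩ with ho
    have hzo : a z < a o := hmono (by rw [hz, ho]; exact Fin.mk_lt_mk.mpr Nat.zero_lt_one)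
    rw [decomp (a o), hQ, zero_smul, zero_add,
      ← Finset.add_sum_erase Finset.univ (fun j => q j • (a j - a o)) (Finset.mem_univ z)]
    have hT_ne : q z • (a z - a o) ≠ 0 := qsmul_ne_zero' (hq z) (sub_ne_zero.mpr hzo.ne)
    have hT : ψ (q z • (a z - a o)) = ψ (i (a z)) := by
      rw [psi_qsmul hAC (sub_ne_zero.mpr hzo.ne) (hq z),
        show a z - a o = -(a o - a z) by abel,
        psi_neg_s13 hAC (sub_ne_zero.mpr hzo.ne'),
        psi_sub hAC hH hI hsucc (haΨ z) (haΨ o) hzo]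
    by_cases hR0 : (∑ j ∈ Finset.univ.erase z, q j • (a j - a o)) = 0
    · rw [hR0, add_zero]
      exact hT
    · have hterm : ∀ j ∈ Finset.univ.erase z, q j • (a j - a o) ≠ 0 →
          ψ (i (a o)) ≤ ψ (q j • (a j - a o)) := by
        intro j hjmem hj
        have hjz : j ≠ z := Finset.ne_of_mem_erase hjmem
        have hjo : j ≠ o := by
          rintro rfl
          simp at hj
        have hoj : a o < a j := by
          apply hmono
          have h1 : j.val ≠ 0 := fun hv => hjz (Fin.ext (by rw [hz, hv]))
          have h2 : j.val ≠ 1 := fun hv => hjo (Fin.ext (by rw [ho, hv]))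
          show (1:ℕ) < j.val
          omega
        rw [psi_qsmul hAC (sub_ne_zero.mpr hoj.ne') (hq j),
          psi_sub hAC hH hI hsucc (haΨ o) (haΨ j) hoj]
      have hRge := psi_sum_ge hAC _ _ _ hterm hR0
      have hgt : ψ (q z • (a z - a o)) < ψ (∑ j ∈ Finset.univ.erase z, q j • (a j - a o)) := by
        rw [hT]
        calc ψ (i (a z)) ≤ a o := hsucc (a z) (a o) (haΨ z) (haΨ o) hzo
          _ < ψ (i (a o)) := lt_s hAC hI (haΨ o)
          _ ≤ _ := hRge
      rw [psi_add hAC hT_ne hR0 hgt]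
      exact hT
  · -- case Σ q ≠ 0
    intro hQ
    rw [decomp (a z)]
    have hfirst_ne : (∑ j, q j) • a z ≠ 0 := qsmul_ne_zero' hQ (haz_ne z)
    have hfirst : ψ ((∑ j, q j) • a z) = ψ (i 0) := by
      rw [psi_qsmul hAC (haz_ne z) hQ]
      exact psi_Psi hAC hH hI hs0 hmin (haΨ z)
    by_cases hR0 : (∑ j, q j • (a j - a z)) = 0
    · rw [hR0, add_zero]
      exact hfirst
    · have hterm : ∀ j ∈ Finset.univ, q j • (a j - a z) ≠ 0 →
          ψ (i (a z)) ≤ ψ (q j • (a j - a z)) := by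
        intro j _ hj
        have hjz : j ≠ z := by
          rintro rfl
          simp at hj
        have hzj : a z < a j := by
          apply hmono
          have h1 : j.val ≠ 0 := fun hv => hjz (Fin.ext (by rw [hz, hv]))
          show (0:ℕ) < j.val
          omega
        rw [psi_qsmul hAC (sub_ne_zero.mpr hzj.ne') (hq j),
          psi_sub hAC hH hI hsucc (haΨ z) (haΨ j) hzj]
      have hRge := psi_sum_ge hAC _ _ _ hterm hR0
      have hgt : ψ ((∑ j, q j) • a z) < ψ (∑ j, q j • (a j - a z)) := by
        rw [hfirst]
        obtain ⟨γ, hγ, hγa⟩ := haΨ z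
        calc ψ (i 0) ≤ a z := hγa ▸ hmin γ hγ
          _ < ψ (i (a z)) := lt_s hAC hI (haΨ z)
          _ ≤ _ := hRge
      rw [psi_add hAC hfirst_ne hR0 hgt]
      exact hfirst
end

section
/- Let (Γ, ψ) be a model of T_log. Let n ≥ 1, α₁ < ⋯ < α_n in Ψ with α₁ > 0, q₁, …, q_n ∈ ℚ\{0}, and α = q₁α₁ + ⋯ + q_nα_n. Then: (1) if q₁ + ⋯ + q_n ≠ 1 then s(α) = s(0); (2) if q₁ + ⋯ + q_n = 1 then s(α) = s(α₁). -/
variable {Γ : Type*} [AddCommGroup Γ] [LinearOrder Γ] [IsOrderedAddMonoid Γ] [Module ℚ Γ]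

set_option linter.unusedSectionVars false
set_option linter.unusedVariables false

section Aux

variable {ψ i : Γ → Γ}

lemma psi_neg_aux (h : IsAsymptoticCouple ψ) {γ : Γ} (hγ : γ ≠ 0) : ψ (-γ) = ψ γ := by
  have := h.2.1 γ (-1) hγ (by norm_num)
  simpa using this

lemma qsmul_ne_zero_aux {q : ℚ} (hq : q ≠ 0) {γ : Γ} (hγ : γ ≠ 0) : q • γ ≠ 0 := by
  intro h0
  apply hγ
  have := congrArg (fun x => q⁻¹ • x) h0
  simpa [smul_smul, inv_mul_cancel₀ hq] using this

lemma psi_qsmul_aux (h : IsAsymptoticCouple ψ) {q : ℚ} (hq : q ≠ 0) {γ : Γ} (hγ : γ ≠ 0) :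
    ψ (q • γ) = ψ γ := by
  have hz : ∀ (k : ℤ), k ≠ 0 → ∀ {δ : Γ}, δ ≠ 0 → ψ ((k : ℚ) • δ) = ψ δ := by
    intro k hk δ hδ
    rw [Int.cast_smul_eq_zsmul]
    exact h.2.1 δ k hδ hk
  have hden : ψ (((q.den : ℤ) : ℚ) • (q • γ)) = ψ (q • γ) :=
    hz (q.den : ℤ) (by exact_mod_cast q.den_ne_zero) (qsmul_ne_zero_aux hq hγ)
  have hrw : ((q.den : ℤ) : ℚ) • (q • γ) = ((q.num : ℤ) : ℚ) • γ := by
    rw [smul_smul]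
    congr 1
    push_cast
    rw [mul_comm]
    exact_mod_cast Rat.mul_den_eq_num q
  rw [hrw] at hden
  rw [← hden, hz (q.num) (Rat.num_ne_zero.mpr hq) hγ]

/-- exact ultrametric inequality when the values differ -/
lemma psi_add_eq_aux (h : IsAsymptoticCouple ψ) {x δ : Γ} (hx : x ≠ 0) (hδ : δ ≠ 0)
    (hlt : ψ x < ψ δ) : x + δ ≠ 0 ∧ ψ (x + δ) = ψ x := by
  have hne : x + δ ≠ 0 := by
    intro h0
    have hxd : x = -δ := eq_neg_of_add_eq_zero_left h0
    rw [hxd, psi_neg_aux h hδ] at hlt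
    exact lt_irrefl _ hlt
  refine ⟨hne, le_antisymm ?_ ?_⟩
  · by_contra hgt
    push_neg at hgt
    have h2 := h.1 (x + δ) (-δ) hne (neg_ne_zero.mpr hδ) (by simpa using hx)
    rw [psi_neg_aux h hδ] at h2
    have h3 : min (ψ (x + δ)) (ψ δ) ≤ ψ x := by
      simpa [add_neg_cancel_right] using h2
    have : ψ x < min (ψ (x + δ)) (ψ δ) := lt_min hgt hlt
    exact absurd h3 (not_le.mpr this)
  · have h1 := h.1 x δ hx hδ hne
    calc ψ x = min (ψ x) (ψ δ) := (min_eq_left hlt.le).symm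
      _ ≤ ψ (x + δ) := h1

lemma psi_sum_lt_aux (h : IsAsymptoticCouple ψ) {ι : Type*} (c : Γ) (s : Finset ι) :
    ∀ (t : ι → Γ), (∀ j ∈ s, t j ≠ 0 → c < ψ (t j)) →
      (∑ j ∈ s, t j) ≠ 0 → c < ψ (∑ j ∈ s, t j) := by
  induction s using Finset.cons_induction with
  | empty => intro t _ h0; simp at h0
  | cons a s ha ih =>
    intro t ht h0
    rw [Finset.sum_cons] at h0 ⊢
    by_cases h1 : t a = 0
    · rw [h1, zero_add] at h0 ⊢
      exact ih t (fun j hj => ht j (Finset.mem_cons_of_mem hj)) h0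
    by_cases h2 : (∑ j ∈ s, t j) = 0
    · rw [h2, add_zero] at h0 ⊢
      exact ht a (Finset.mem_cons_self ..) h1
    have hmin := h.1 _ _ h1 h2 h0
    have hca := ht a (Finset.mem_cons_self ..) h1
    have hcs := ih t (fun j hj => ht j (Finset.mem_cons_of_mem hj)) h2
    exact lt_of_lt_of_le (lt_min hca hcs) hmin

/-- Fixed Point Identity: if `ψ (α - β) = β` then `β = s α := ψ (i α)`. -/
lemma fixed_point_aux (hInt : IsIntegration ψ i) {α β : Γ} (hne : α - β ≠ 0)
    (hψ : ψ (α - β) = β) : ψ (i α) = β := by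
  have huniq := (hInt α).2 (α - β) hne (by rw [hψ]; abel)
  rw [← huniq, hψ]

/-- `s b > b` for `b ∈ Ψ`. -/
lemma s_gt_aux (h : IsTlogModel ψ i) {b : Γ} (hb : ∃ γ : Γ, γ ≠ 0 ∧ ψ γ = b) :
    b < ψ (i b) := by
  obtain ⟨γb, hγb, hψγb⟩ := hb
  obtain ⟨⟨hib, hib2⟩, _⟩ := h.2.2.1 b
  by_contra hle
  push_neg at hle
  have hibeq : i b = b - ψ (i b) := eq_sub_of_add_eq hib2
  have hibpos : 0 < i b := by
    rcases lt_trichotomy (i b) 0 with h1 | h1 | h1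
    · rw [hibeq] at h1
      exact absurd hle (not_le.mpr (sub_neg.mp h1))
    · exact absurd h1 hib
    · exact h1
  have := h.1.2.2 (i b) γb hibpos hγb
  rw [hib2, hψγb] at this
  exact lt_irrefl _ this

/-- For `A < B` in `Ψ`: `ψ (B - A) = s A`. -/
lemma psi_diff_aux (h : IsTlogModel ψ i) {A B : Γ}
    (hA : ∃ γ : Γ, γ ≠ 0 ∧ ψ γ = A) (hB : ∃ γ : Γ, γ ≠ 0 ∧ ψ γ = B) (hAB : A < B) :
    ψ (B - A) = ψ (i A) := by
  obtain ⟨γB, hγB, hψγB⟩ := hB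
  obtain ⟨⟨hiA, hiA2⟩, _⟩ := h.2.2.1 A
  have hBA : B - A ≠ 0 := sub_ne_zero.mpr (ne_of_gt hAB)
  have hsAgt : A < ψ (i A) := s_gt_aux h hA
  have hsucc : ψ (i A) ≤ B := h.2.2.2.2.2 A B hA ⟨γB, hγB, hψγB⟩ hAB
  -- upper bound
  have hiAval : -(i A) = ψ (i A) - A := by
    rw [neg_eq_iff_add_eq_zero, add_sub, hiA2, sub_self]
  have hupper : ψ (B - A) ≤ ψ (i A) := by
    have h1 : (0:Γ) < -(i A) := by rw [hiAval]; exact sub_pos.mpr hsAgt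
    have h2 : -(i A) ≤ B - A := by rw [hiAval]; exact sub_le_sub_right hsucc A
    have := h.2.1 (-(i A)) (B - A) h1 h2
    rwa [psi_neg_aux h.1 hiA] at this
  -- lower bound
  have hlower : ψ (i A) ≤ ψ (B - A) := by
    have h3 := h.1.2.2 (B - A) γB (sub_pos.mpr hAB) hγB
    rw [hψγB] at h3
    have hAlt : A < ψ (B - A) := by
      rw [add_comm] at h3
      have h4 : B - (B - A) < ψ (B - A) := sub_lt_iff_lt_add.mpr h3
      rwa [sub_sub_cancel] at h4
    exact h.2.2.2.2.2 A (ψ (B - A)) hA ⟨B - A, hBA, rfl⟩ hAlt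
  exact le_antisymm hupper hlower

end Aux

/-- for `0 < α₁ < ⋯ < α_n` in `Ψ` and nonzero rationals `q_j`, with
`α = Σ q_j α_j`: if `Σ q_j ≠ 1` then `s α = s 0`, and if `Σ q_j = 1` then `s α = s α₁`. -/
theorem s_of_rational_combination (ψ i : Γ → Γ) (h : IsTlogModel ψ i)
    (n : ℕ) (hn : 0 < n) (a : Fin n → Γ) (hmono : StrictMono a)
    (haΨ : ∀ j, ∃ γ : Γ, γ ≠ 0 ∧ ψ γ = a j) (hpos : 0 < a ⟨0, hn⟩)
    (q : Fin n → ℚ) (hq : ∀ j, q j ≠ 0) :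
    ((∑ j, q j) ≠ 1 → ψ (i (∑ j, q j • a j)) = ψ (i 0)) ∧
    ((∑ j, q j) = 1 → ψ (i (∑ j, q j • a j)) = ψ (i (a ⟨0, hn⟩))) := by
  have hAC := h.1
  have hH := h.2.1
  have hInt := h.2.2.1
  have hs0pos := h.2.2.2.1
  have hs0min := h.2.2.2.2.1
  have hsucc := h.2.2.2.2.2
  obtain ⟨⟨hi0, hi02⟩, -⟩ := hInt 0
  have hs0Ψ : ∃ γ : Γ, γ ≠ 0 ∧ ψ γ = ψ (i 0) := ⟨i 0, hi0, rfl⟩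
  have hs0ne : ψ (i 0) ≠ 0 := ne_of_gt hs0pos
  have hψs0 : ψ (ψ (i 0)) = ψ (i 0) := by
    have h1 : ψ (i 0) = -(i 0) :=
      eq_neg_of_add_eq_zero_left (by rw [add_comm]; exact hi02)
    rw [h1, psi_neg_aux hAC hi0, ← h1]
  have haΨle : ∀ j, ψ (i 0) ≤ a j := by
    intro j
    obtain ⟨γ, hγ, hγ2⟩ := haΨ j
    rw [← hγ2]
    exact hs0min γ hγ
  -- the common final step via the fixed point identity
  have final : ∀ (β x δ : Γ), (∑ j, q j • a j) - β = x + δ → x ≠ 0 → ψ x = β →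
      (δ ≠ 0 → β < ψ δ) → ψ (i (∑ j, q j • a j)) = β := by
    intro β x δ hθ hx hψx hδ
    by_cases hδ0 : δ = 0
    · subst hδ0
      rw [add_zero] at hθ
      exact fixed_point_aux hInt (by rw [hθ]; exact hx) (by rw [hθ, hψx])
    · have hlt : ψ x < ψ δ := by rw [hψx]; exact hδ hδ0
      obtain ⟨hne, heq⟩ := psi_add_eq_aux hAC hx hδ0 hlt
      exact fixed_point_aux hInt (by rw [hθ]; exact hne) (by rw [hθ, heq, hψx])
  constructor
  · -- Part 1 : Σ q ≠ 1
    intro hS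
    apply final (ψ (i 0)) (((∑ j, q j) - 1) • ψ (i 0)) (∑ j, q j • (a j - ψ (i 0)))
    · have h1 : ∑ j, q j • (a j - ψ (i 0))
          = (∑ j, q j • a j) - (∑ j, q j) • ψ (i 0) := by
        rw [Finset.sum_smul, ← Finset.sum_sub_distrib]
        exact Finset.sum_congr rfl fun j _ => smul_sub (q j) (a j) (ψ (i 0))
      rw [h1, sub_smul, one_smul]
      abel
    · exact qsmul_ne_zero_aux (sub_ne_zero.mpr hS) hs0ne
    · rw [psi_qsmul_aux hAC (sub_ne_zero.mpr hS) hs0ne, hψs0]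
    · intro hδ0
      refine psi_sum_lt_aux hAC (ψ (i 0)) Finset.univ _ (fun j _ htj => ?_) hδ0
      have hne2 : a j - ψ (i 0) ≠ 0 := by
        intro h0
        exact htj (by rw [h0, smul_zero])
      have hlt2 : ψ (i 0) < a j :=
        lt_of_le_of_ne (haΨle j) fun he => hne2 (by rw [← he, sub_self])
      rw [psi_qsmul_aux hAC (hq j) hne2,
        psi_diff_aux h hs0Ψ (haΨ j) hlt2]
      exact s_gt_aux h hs0Ψ
  · -- Part 2 : Σ q = 1
    intro hS
    obtain ⟨⟨hiA, hiA2⟩, -⟩ := hInt (a ⟨0, hn⟩)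
    have hAΨ := haΨ ⟨0, hn⟩
    have hsAΨ : ∃ γ : Γ, γ ≠ 0 ∧ ψ γ = ψ (i (a ⟨0, hn⟩)) := ⟨i (a ⟨0, hn⟩), hiA, rfl⟩
    have hAsA : a ⟨0, hn⟩ < ψ (i (a ⟨0, hn⟩)) := s_gt_aux h hAΨ
    have hiAeq : a ⟨0, hn⟩ - ψ (i (a ⟨0, hn⟩)) = i (a ⟨0, hn⟩) :=
      (eq_sub_of_add_eq hiA2).symm
    apply final (ψ (i (a ⟨0, hn⟩)))
      (q ⟨0, hn⟩ • (a ⟨0, hn⟩ - ψ (i (a ⟨0, hn⟩))))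
      (∑ j ∈ Finset.univ.erase ⟨0, hn⟩, q j • (a j - ψ (i (a ⟨0, hn⟩))))
    · rw [Finset.add_sum_erase Finset.univ
        (fun j => q j • (a j - ψ (i (a ⟨0, hn⟩)))) (Finset.mem_univ _)]
      have h1 : ∑ j, q j • (a j - ψ (i (a ⟨0, hn⟩)))
          = (∑ j, q j • a j) - (∑ j, q j) • ψ (i (a ⟨0, hn⟩)) := by
        rw [Finset.sum_smul, ← Finset.sum_sub_distrib]
        exact Finset.sum_congr rfl fun j _ => smul_sub (q j) (a j) _
      rw [h1, hS, one_smul]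
    · exact qsmul_ne_zero_aux (hq _) (sub_ne_zero.mpr (ne_of_lt hAsA))
    · rw [psi_qsmul_aux hAC (hq _) (sub_ne_zero.mpr (ne_of_lt hAsA)), hiAeq]
    · intro hδ0
      refine psi_sum_lt_aux hAC _ _ _ (fun j hj htj => ?_) hδ0
      have hjne : j ≠ ⟨0, hn⟩ := (Finset.mem_erase.mp hj).1
      have hne2 : a j - ψ (i (a ⟨0, hn⟩)) ≠ 0 := by
        intro h0
        exact htj (by rw [h0, smul_zero])
      have hAj : a ⟨0, hn⟩ < a j := by
        refine hmono (lt_of_le_of_ne ?_ (Ne.symm hjne))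
        simp [Fin.le_def]
      have hle : ψ (i (a ⟨0, hn⟩)) ≤ a j :=
        hsucc (a ⟨0, hn⟩) (a j) hAΨ (haΨ j) hAj
      have hlt2 : ψ (i (a ⟨0, hn⟩)) < a j :=
        lt_of_le_of_ne hle fun he => hne2 (by rw [← he, sub_self])
      rw [psi_qsmul_aux hAC (hq j) hne2,
        psi_diff_aux h hsAΨ (haΨ j) hlt2]
      exact s_gt_aux h hsAΨ
end

section
/- Let (Γ, ψ) be a model of T_log. Then Ψ = ψ(Γ\{0}) is a linearly independent subset of Γ regarded as a vector space over ℚ: no nontrivial rational linear combination of distinct elements of Ψ equals 0. -/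
variable {Γ : Type*} [AddCommGroup Γ] [LinearOrder Γ] [IsOrderedAddMonoid Γ] [Module ℚ Γ]

section Aux

set_option linter.unusedSectionVars false

variable {ψ i : Γ → Γ}

lemma tl_psi_neg (h : IsTlogModel ψ i) (γ : Γ) (hγ : γ ≠ 0) : ψ (-γ) = ψ γ := by
  have := h.1.2.1 γ (-1) hγ (by norm_num)
  simpa using this

lemma tl_smul_ne (q : ℚ) (γ : Γ) (hq : q ≠ 0) (hγ : γ ≠ 0) : q • γ ≠ 0 := by
  intro e
  apply hγ
  have := congrArg (fun x => q⁻¹ • x) e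
  simpa [smul_smul, inv_mul_cancel₀ hq] using this

lemma tl_psi_qsmul (h : IsTlogModel ψ i) (q : ℚ) (γ : Γ) (hq : q ≠ 0) (hγ : γ ≠ 0) :
    ψ (q • γ) = ψ γ := by
  have hden : ((q.den : ℤ) : ℚ) * q = (q.num : ℚ) := by
    rw [mul_comm]
    exact_mod_cast Rat.mul_den_eq_num q
  have key : (q.den : ℤ) • (q • γ) = (q.num : ℤ) • γ := by
    rw [← Int.cast_smul_eq_zsmul ℚ, ← Int.cast_smul_eq_zsmul ℚ, smul_smul, hden]
  have h1 := h.1.2.1 (q • γ) (q.den : ℤ) (tl_smul_ne q γ hq hγ) (by exact_mod_cast q.den_nz)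
  have h2 := h.1.2.1 γ q.num hγ (Rat.num_ne_zero.mpr hq)
  rw [key] at h1
  rw [← h1, h2]

lemma tl_psi_s0 (h : IsTlogModel ψ i) : ψ (ψ (i 0)) = ψ (i 0) := by
  have h0 := (h.2.2.1 0).1.1
  have h2 := (h.2.2.1 0).1.2
  have : ψ (i 0) = -(i 0) := eq_neg_of_add_eq_zero_right h2
  exact (congrArg ψ this).trans (tl_psi_neg h _ h0)

lemma tl_psi_big (h : IsTlogModel ψ i) (γ : Γ) (hγ : ψ (i 0) ≤ γ) : ψ γ = ψ (i 0) := by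
  have hpos : 0 < γ := lt_of_lt_of_le h.2.2.2.1 hγ
  have h1 : ψ γ ≤ ψ (ψ (i 0)) := h.2.1 _ _ h.2.2.2.1 hγ
  rw [tl_psi_s0 h] at h1
  exact le_antisymm h1 (h.2.2.2.2.1 γ (ne_of_gt hpos))

lemma tl_Psi_ge (h : IsTlogModel ψ i) (α : Γ) (hα : ∃ δ : Γ, δ ≠ 0 ∧ ψ δ = α) :
    ψ (i 0) ≤ α := by
  obtain ⟨δ, hδ, rfl⟩ := hα
  exact h.2.2.2.2.1 δ hδ

lemma tl_Psi_pos (h : IsTlogModel ψ i) (α : Γ) (hα : ∃ δ : Γ, δ ≠ 0 ∧ ψ δ = α) : 0 < α :=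
  lt_of_lt_of_le h.2.2.2.1 (tl_Psi_ge h α hα)

lemma tl_psi_Psi (h : IsTlogModel ψ i) (α : Γ) (hα : ∃ δ : Γ, δ ≠ 0 ∧ ψ δ = α) :
    ψ α = ψ (i 0) :=
  tl_psi_big h α (tl_Psi_ge h α hα)

lemma tl_i_neg (h : IsTlogModel ψ i) (α : Γ) (hα : ∃ δ : Γ, δ ≠ 0 ∧ ψ δ = α) : i α < 0 := by
  obtain ⟨δ, hδ, hδα⟩ := hα
  have h1 := (h.2.2.1 α).1.1
  have h2 := (h.2.2.1 α).1.2
  rcases lt_trichotomy (i α) 0 with hlt | he | hgt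
  · exact hlt
  · exact absurd he h1
  · have := h.1.2.2 (i α) δ hgt hδ
    rw [h2, hδα] at this
    exact absurd this (lt_irrefl _)

lemma tl_s_gt (h : IsTlogModel ψ i) (α : Γ) (hα : ∃ δ : Γ, δ ≠ 0 ∧ ψ δ = α) :
    α < ψ (i α) := by
  have h2 := (h.2.2.1 α).1.2
  have hin := tl_i_neg h α hα
  calc α = i α + ψ (i α) := h2.symm
    _ < 0 + ψ (i α) := by simpa using hin
    _ = ψ (i α) := zero_add _

lemma tl_s_mem (h : IsTlogModel ψ i) (α : Γ) : ∃ δ : Γ, δ ≠ 0 ∧ ψ δ = ψ (i α) :=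
  ⟨i α, (h.2.2.1 α).1.1, rfl⟩

lemma tl_s_lt_s (h : IsTlogModel ψ i) (α β : Γ) (hα : ∃ δ : Γ, δ ≠ 0 ∧ ψ δ = α)
    (hβ : ∃ δ : Γ, δ ≠ 0 ∧ ψ δ = β) (hab : α < β) : ψ (i α) < ψ (i β) :=
  lt_of_le_of_lt (h.2.2.2.2.2 α β hα hβ hab) (tl_s_gt h β hβ)

lemma tl_s0_lt_s (h : IsTlogModel ψ i) (α : Γ) (hα : ∃ δ : Γ, δ ≠ 0 ∧ ψ δ = α) :
    ψ (i 0) < ψ (i α) :=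
  lt_of_le_of_lt (tl_Psi_ge h α hα) (tl_s_gt h α hα)

lemma tl_psi_sub (h : IsTlogModel ψ i) (α β : Γ) (hα : ∃ δ : Γ, δ ≠ 0 ∧ ψ δ = α)
    (hβ : ∃ δ : Γ, δ ≠ 0 ∧ ψ δ = β) (hab : α < β) :
    β - α ≠ 0 ∧ ψ (β - α) = ψ (i α) := by
  have hiα := (h.2.2.1 α).1.1
  have hia := (h.2.2.1 α).1.2
  have hine := tl_i_neg h α hα
  have hsucc := h.2.2.2.2.2 α β hα hβ hab
  have hsub : (0:Γ) < β - α := sub_pos.mpr hab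
  refine ⟨ne_of_gt hsub, ?_⟩
  have hrw : ψ (i α) - α = -(i α) := by
    have h0 : (i α + ψ (i α)) - α = 0 := by rw [hia]; exact sub_self α
    calc ψ (i α) - α = -(i α) + ((i α + ψ (i α)) - α) := by abel
      _ = -(i α) := by rw [h0, add_zero]
  have hle : -(i α) ≤ β - α := hrw ▸ sub_le_sub_right hsucc α
  have hup : ψ (β - α) ≤ ψ (i α) := by
    have := h.2.1 (-(i α)) (β - α) (neg_pos.mpr hine) hle
    rwa [tl_psi_neg h _ hiα] at this
  obtain ⟨δ, hδ, hδβ⟩ := hβ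
  have h3 := h.1.2.2 (β - α) δ hsub hδ
  rw [hδβ] at h3
  have hgt : α < ψ (β - α) := by
    have := sub_lt_sub_right h3 (β - α); simpa using this
  have hlo := h.2.2.2.2.2 α (ψ (β - α)) hα ⟨β - α, ne_of_gt hsub, rfl⟩ hgt
  exact le_antisymm hup hlo

lemma tl_psi_add (h : IsTlogModel ψ i) (α β : Γ) (hα : α ≠ 0) (hβ : β ≠ 0)
    (hlt : ψ α < ψ β) : α + β ≠ 0 ∧ ψ (α + β) = ψ α := by
  have hne : α + β ≠ 0 := by
    intro e
    have hb : β = -α := eq_neg_of_add_eq_zero_right e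
    rw [hb, tl_psi_neg h α hα] at hlt
    exact lt_irrefl _ hlt
  refine ⟨hne, ?_⟩
  have h1 := h.1.1 α β hα hβ hne
  rw [min_eq_left (le_of_lt hlt)] at h1
  by_contra hc
  have h2 : ψ α < ψ (α + β) := lt_of_le_of_ne h1 (Ne.symm hc)
  have h3 := h.1.1 (α + β) (-β) hne (neg_ne_zero.mpr hβ) (by simpa using hα)
  rw [add_neg_cancel_right, tl_psi_neg h β hβ] at h3
  rcases min_le_iff.mp h3 with h4 | h4
  · exact absurd h4 (not_le.mpr h2)
  · exact absurd h4 (not_le.mpr hlt)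

end Aux

section Main

set_option linter.unusedSectionVars false

variable {ψ i : Γ → Γ}

lemma tl_finish (h : IsTlogModel ψ i) (α₁ m u W : Γ) (S' : ℚ)
    (hα₁ : ∃ δ : Γ, δ ≠ 0 ∧ ψ δ = α₁) (hm : ∃ δ : Γ, δ ≠ 0 ∧ ψ δ = m) (h1m : α₁ < m)
    (hu : u ≠ 0) (hψu : ψ u = ψ (i α₁)) (hW : W ≠ 0)
    (hW0 : S' = 0 → ψ W = ψ (i m)) (hW1 : S' ≠ 0 → ψ W = ψ (i 0)) :
    (u + W ≠ 0) ∧ (S' = 0 → ψ (u + W) = ψ (i α₁)) ∧ (S' ≠ 0 → ψ (u + W) = ψ (i 0)) := by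
  by_cases hQ : S' = 0
  · have hWψ := hW0 hQ
    have hlt : ψ u < ψ W := by rw [hψu, hWψ]; exact tl_s_lt_s h α₁ m hα₁ hm h1m
    obtain ⟨hne, hval⟩ := tl_psi_add h u W hu hW hlt
    exact ⟨hne, fun _ => hval.trans hψu, fun hQ' => absurd hQ hQ'⟩
  · have hWψ := hW1 hQ
    have hlt : ψ W < ψ u := by rw [hψu, hWψ]; exact tl_s0_lt_s h α₁ hα₁
    obtain ⟨hne, hval⟩ := tl_psi_add h W u hW hu hlt
    rw [add_comm W u] at hne hval
    exact ⟨hne, fun hQ' => absurd hQ' hQ, fun _ => hval.trans hWψ⟩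

lemma tl_main (h : IsTlogModel ψ i) :
    ∀ t : Finset Γ, ∀ ht : t.Nonempty, (∀ α ∈ t, ∃ δ : Γ, δ ≠ 0 ∧ ψ δ = α) →
    ∀ g : Γ → ℚ, (∀ α ∈ t, g α ≠ 0) →
    (∑ α ∈ t, g α • α) ≠ 0 ∧
      ((∑ α ∈ t, g α) = 0 → ψ (∑ α ∈ t, g α • α) = ψ (i (t.min' ht))) ∧
      ((∑ α ∈ t, g α) ≠ 0 → ψ (∑ α ∈ t, g α • α) = ψ (i 0)) := by
  classical
  intro t
  induction t using Finset.strongInduction with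
  | _ t IH =>
  intro ht hΨ g hg
  have hα₁t : t.min' ht ∈ t := t.min'_mem ht
  have hΨ1 := hΨ _ hα₁t
  have hq₁ := hg _ hα₁t
  have hα₁pos := tl_Psi_pos h _ hΨ1
  by_cases h1 : t.erase (t.min' ht) = ∅
  · -- singleton case
    have honly : ∀ b ∈ t, b ≠ t.min' ht → False := fun b hb hne => by
      have : b ∈ t.erase (t.min' ht) := Finset.mem_erase.mpr ⟨hne, hb⟩
      rw [h1] at this
      exact absurd this (Finset.notMem_empty b)
    have sum1 : (∑ α ∈ t, g α • α) = g (t.min' ht) • (t.min' ht) :=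
      Finset.sum_eq_single_of_mem _ hα₁t fun b hb hne => absurd (honly b hb hne) not_false
    have sum2 : (∑ α ∈ t, g α) = g (t.min' ht) :=
      Finset.sum_eq_single_of_mem _ hα₁t fun b hb hne => absurd (honly b hb hne) not_false
    refine ⟨?_, ?_, ?_⟩
    · rw [sum1]; exact tl_smul_ne _ _ hq₁ (ne_of_gt hα₁pos)
    · intro hQ; rw [sum2] at hQ; exact absurd hQ hq₁
    · intro _
      rw [sum1, tl_psi_qsmul h _ _ hq₁ (ne_of_gt hα₁pos)]
      exact tl_psi_Psi h _ hΨ1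
  · -- at least two elements
    have ht' : (t.erase (t.min' ht)).Nonempty := Finset.nonempty_iff_ne_empty.mpr h1
    have hα₂e : (t.erase (t.min' ht)).min' ht' ∈ t.erase (t.min' ht) := Finset.min'_mem _ _
    have hα₂t : (t.erase (t.min' ht)).min' ht' ∈ t := Finset.mem_of_mem_erase hα₂e
    have hα₂ne : (t.erase (t.min' ht)).min' ht' ≠ t.min' ht := (Finset.mem_erase.mp hα₂e).1
    have h12 : t.min' ht < (t.erase (t.min' ht)).min' ht' :=
      lt_of_le_of_ne (t.min'_le _ hα₂t) (Ne.symm hα₂ne)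
    have hΨ2 := hΨ _ hα₂t
    have hq₂ := hg _ hα₂t
    -- the element u
    have hsubne : t.min' ht - (t.erase (t.min' ht)).min' ht' ≠ 0 :=
      sub_ne_zero.mpr (ne_of_lt h12)
    have hu_ne : g (t.min' ht) • (t.min' ht - (t.erase (t.min' ht)).min' ht') ≠ 0 :=
      tl_smul_ne _ _ hq₁ hsubne
    have hψu : ψ (g (t.min' ht) • (t.min' ht - (t.erase (t.min' ht)).min' ht')) =
        ψ (i (t.min' ht)) := by
      rw [tl_psi_qsmul h _ _ hq₁ hsubne, ← neg_sub,
        tl_psi_neg h _ (tl_psi_sub h _ _ hΨ1 hΨ2 h12).1]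
      exact (tl_psi_sub h _ _ hΨ1 hΨ2 h12).2
    by_cases hcase : g (t.min' ht) + g ((t.erase (t.min' ht)).min' ht') = 0
    · -- case B
      have hgα2 : g ((t.erase (t.min' ht)).min' ht') = -g (t.min' ht) :=
        eq_neg_of_add_eq_zero_right hcase
      by_cases h2e : (t.erase (t.min' ht)).erase ((t.erase (t.min' ht)).min' ht') = ∅
      · -- exactly two elements
        have honly : ∀ b ∈ t.erase (t.min' ht), b ≠ (t.erase (t.min' ht)).min' ht' → False :=
          fun b hb hne => by
            have : b ∈ (t.erase (t.min' ht)).erase ((t.erase (t.min' ht)).min' ht') :=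
              Finset.mem_erase.mpr ⟨hne, hb⟩
            rw [h2e] at this
            exact absurd this (Finset.notMem_empty b)
        have sumE1 : ∑ α ∈ t.erase (t.min' ht), g α • α =
            g ((t.erase (t.min' ht)).min' ht') • ((t.erase (t.min' ht)).min' ht') :=
          Finset.sum_eq_single_of_mem _ hα₂e fun b hb hne => absurd (honly b hb hne) not_false
        have sumE2 : ∑ α ∈ t.erase (t.min' ht), g α = g ((t.erase (t.min' ht)).min' ht') :=
          Finset.sum_eq_single_of_mem _ hα₂e fun b hb hne => absurd (honly b hb hne) not_false
        have sumu : ∑ α ∈ t, g α • α =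
            g (t.min' ht) • (t.min' ht - (t.erase (t.min' ht)).min' ht') := by
          rw [← Finset.add_sum_erase t (fun α => g α • α) hα₁t, sumE1, hgα2, neg_smul, smul_sub]
          abel
        have sum2 : ∑ α ∈ t, g α = 0 := by
          rw [← Finset.add_sum_erase t g hα₁t, sumE2, hcase]
        refine ⟨?_, ?_, ?_⟩
        · rw [sumu]; exact hu_ne
        · intro _; rw [sumu]; exact hψu
        · intro hQ; exact absurd sum2 hQ
      · -- at least three elements
        have ht'' : ((t.erase (t.min' ht)).erase ((t.erase (t.min' ht)).min' ht')).Nonempty :=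
          Finset.nonempty_iff_ne_empty.mpr h2e
        have hsub : (t.erase (t.min' ht)).erase ((t.erase (t.min' ht)).min' ht') ⊂ t :=
          Finset.ssubset_of_subset_of_ssubset (Finset.erase_subset _ _)
            (Finset.erase_ssubset hα₁t)
        obtain ⟨hWne, hW0, hW1⟩ := IH _ hsub ht''
          (fun α hα => hΨ α (Finset.mem_of_mem_erase (Finset.mem_of_mem_erase hα)))
          g (fun α hα => hg α (Finset.mem_of_mem_erase (Finset.mem_of_mem_erase hα)))
        have hα₃e := Finset.min'_mem _ ht''
        have hα₃t : ((t.erase (t.min' ht)).erase ((t.erase (t.min' ht)).min' ht')).min' ht'' ∈ t :=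
          Finset.mem_of_mem_erase (Finset.mem_of_mem_erase hα₃e)
        have hα₃ne : ((t.erase (t.min' ht)).erase ((t.erase (t.min' ht)).min' ht')).min' ht'' ≠
            t.min' ht :=
          (Finset.mem_erase.mp (Finset.mem_of_mem_erase hα₃e)).1
        have h13 : t.min' ht <
            ((t.erase (t.min' ht)).erase ((t.erase (t.min' ht)).min' ht')).min' ht'' :=
          lt_of_le_of_ne (t.min'_le _ hα₃t) (Ne.symm hα₃ne)
        have htot : ∑ α ∈ t, g α • α =
            g (t.min' ht) • (t.min' ht - (t.erase (t.min' ht)).min' ht') +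
            ∑ α ∈ (t.erase (t.min' ht)).erase ((t.erase (t.min' ht)).min' ht'), g α • α := by
          rw [← Finset.add_sum_erase t (fun α => g α • α) hα₁t,
            ← Finset.add_sum_erase _ (fun α => g α • α) hα₂e, hgα2, neg_smul, smul_sub]
          abel
        have htotg : ∑ α ∈ t, g α =
            ∑ α ∈ (t.erase (t.min' ht)).erase ((t.erase (t.min' ht)).min' ht'), g α := by
          rw [← Finset.add_sum_erase t g hα₁t, ← Finset.add_sum_erase _ g hα₂e, hgα2]
          ring
        rw [htot, htotg]
        exact tl_finish h _ _ _ _ _ hΨ1 (hΨ _ hα₃t) h13 hu_ne hψu hWne hW0 hW1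
    · -- case A: modify the coefficient of α₂
      set g' : Γ → ℚ :=
        fun x => if x = (t.erase (t.min' ht)).min' ht' then g (t.min' ht) + g x else g x
        with hg'def
      have hg'2 : g' ((t.erase (t.min' ht)).min' ht') =
          g (t.min' ht) + g ((t.erase (t.min' ht)).min' ht') := by simp [hg'def]
      have hg'ne : ∀ α ∈ t.erase (t.min' ht), g' α ≠ 0 := by
        intro α hα
        by_cases he : α = (t.erase (t.min' ht)).min' ht'
        · rw [he, hg'2]; exact hcase
        · simp only [hg'def, if_neg he]
          exact hg α (Finset.mem_of_mem_erase hα)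
      obtain ⟨hWne, hW0, hW1⟩ := IH _ (Finset.erase_ssubset hα₁t) ht'
        (fun α hα => hΨ α (Finset.mem_of_mem_erase hα)) g' hg'ne
      have hS' : ∑ α ∈ t.erase (t.min' ht), g' α • α =
          g (t.min' ht) • ((t.erase (t.min' ht)).min' ht') +
          ∑ α ∈ t.erase (t.min' ht), g α • α := by
        rw [← Finset.add_sum_erase _ (fun α => g' α • α) hα₂e,
          ← Finset.add_sum_erase _ (fun α => g α • α) hα₂e]
        have e1 : ∑ α ∈ (t.erase (t.min' ht)).erase ((t.erase (t.min' ht)).min' ht'), g' α • α =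
            ∑ α ∈ (t.erase (t.min' ht)).erase ((t.erase (t.min' ht)).min' ht'), g α • α :=
          Finset.sum_congr rfl fun α hα => by
            simp only [hg'def, if_neg (Finset.mem_erase.mp hα).1]
        rw [e1, hg'2, add_smul]
        abel
      have hSg' : ∑ α ∈ t.erase (t.min' ht), g' α =
          g (t.min' ht) + ∑ α ∈ t.erase (t.min' ht), g α := by
        rw [← Finset.add_sum_erase _ g' hα₂e, ← Finset.add_sum_erase _ g hα₂e]
        have e1 : ∑ α ∈ (t.erase (t.min' ht)).erase ((t.erase (t.min' ht)).min' ht'), g' α =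
            ∑ α ∈ (t.erase (t.min' ht)).erase ((t.erase (t.min' ht)).min' ht'), g α :=
          Finset.sum_congr rfl fun α hα => by
            simp only [hg'def, if_neg (Finset.mem_erase.mp hα).1]
        rw [e1, hg'2]
        ring
      have htot : ∑ α ∈ t, g α • α =
          g (t.min' ht) • (t.min' ht - (t.erase (t.min' ht)).min' ht') +
          ∑ α ∈ t.erase (t.min' ht), g' α • α := by
        rw [← Finset.add_sum_erase t (fun α => g α • α) hα₁t, hS', smul_sub]
        abel
      have htotg : ∑ α ∈ t, g α = ∑ α ∈ t.erase (t.min' ht), g' α := by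
        rw [← Finset.add_sum_erase t g hα₁t, hSg']
      rw [htot, htotg]
      exact tl_finish h _ _ _ _ _ hΨ1 hΨ2 h12 hu_ne hψu hWne hW0 hW1

end Main


/-- in a model of `T_log`, the set `Ψ = ψ(Γ \ {0})` is ℚ-linearly
independent in `Γ`. -/
theorem Psi_linearIndependent (ψ i : Γ → Γ) (h : IsTlogModel ψ i) :
    LinearIndependent ℚ
      (fun γ : {γ : Γ // ∃ δ : Γ, δ ≠ 0 ∧ ψ δ = γ} => (γ : Γ)) := by
  classical
  rw [linearIndependent_iff']
  intro s g hsum j hj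
  by_contra hgj
  set t : Finset Γ := (s.filter fun k => g k ≠ 0).image Subtype.val with htdef
  have ht : t.Nonempty :=
    ⟨j.val, Finset.mem_image.mpr ⟨j, Finset.mem_filter.mpr ⟨hj, hgj⟩, rfl⟩⟩
  have hΨt : ∀ α ∈ t, ∃ δ : Γ, δ ≠ 0 ∧ ψ δ = α := by
    intro α hα
    obtain ⟨k, _, rfl⟩ := Finset.mem_image.mp hα
    exact k.2
  set G : Γ → ℚ := fun x => if hx : ∃ δ : Γ, δ ≠ 0 ∧ ψ δ = x then g ⟨x, hx⟩ else 0 with hGdef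
  have hGval : ∀ k : {γ : Γ // ∃ δ : Γ, δ ≠ 0 ∧ ψ δ = γ}, G k.val = g k := by
    intro k
    simp only [hGdef, dif_pos k.2, Subtype.coe_eta]
  have hGne : ∀ α ∈ t, G α ≠ 0 := by
    intro α hα
    obtain ⟨k, hk, rfl⟩ := Finset.mem_image.mp hα
    rw [hGval k]
    exact (Finset.mem_filter.mp hk).2
  have hsum' : ∑ α ∈ t, G α • α = 0 := by
    rw [htdef, Finset.sum_image (fun a _ b _ hab => Subtype.val_injective hab)]
    calc ∑ k ∈ s.filter (fun k => g k ≠ 0), G k.val • k.val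
        = ∑ k ∈ s.filter (fun k => g k ≠ 0), g k • k.val :=
          Finset.sum_congr rfl fun k _ => by rw [hGval k]
      _ = ∑ k ∈ s, g k • k.val :=
          Finset.sum_filter_of_ne fun k _ hne h0 => hne (by rw [h0, zero_smul])
      _ = 0 := hsum
  exact (tl_main h t ht hΨt G hGne).1 hsum'
end

section
/- Let (Γ, ψ) be a model of T_log. If F: Ψ → Γ∪{∞} is the s-function F(x) = Σⱼ qⱼ s^{kⱼ}(x) − β restricted to its domain D_F, then F is injective on D_F. -/
variable {Γ : Type*} [AddCommGroup Γ] [LinearOrder Γ] [IsOrderedAddMonoid Γ] [Module ℚ Γ]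

/-- `s^k` for `k ∈ ℤ`, where `s := ψ ∘ i` and negative powers are iterates of
the predecessor function `p`. -/
def sIter (ψ i p : Γ → Γ) (k : ℤ) (x : Γ) : Γ :=
  if 0 ≤ k then (fun y => ψ (i y))^[k.toNat] x else p^[(-k).toNat] x

set_option linter.unusedSectionVars false
namespace SFunAux

lemma den_smul (q : ℚ) (x : Γ) : q.den • (q • x) = q.num • x := by
  rw [← Nat.cast_smul_eq_nsmul ℚ, ← Int.cast_smul_eq_zsmul ℚ, smul_smul, Rat.den_mul_eq_num]

lemma qsmul_pos {q : ℚ} (hq : 0 < q) {x : Γ} (hx : 0 < x) : 0 < q • x := by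
  by_contra hle
  push_neg at hle
  have h1 : q.den • (q • x) ≤ 0 := nsmul_nonpos hle q.den
  rw [den_smul] at h1
  exact absurd h1 (not_le.mpr (zsmul_pos hx (Rat.num_pos.mpr hq)))

lemma qsmul_nonneg {q : ℚ} (hq : 0 ≤ q) {x : Γ} (hx : 0 ≤ x) : 0 ≤ q • x := by
  rcases hq.eq_or_lt with rfl | hq
  · simp
  rcases hx.eq_or_lt with rfl | hx
  · simp
  exact (qsmul_pos hq hx).le

lemma qsmul_lt_qsmul {q : ℚ} (hq : 0 < q) {x y : Γ} (h : x < y) : q • x < q • y := by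
  have := qsmul_pos hq (sub_pos.mpr h)
  rw [smul_sub] at this
  exact sub_pos.mp this

lemma qsmul_le_qsmul {q : ℚ} (hq : 0 ≤ q) {x y : Γ} (h : x ≤ y) : q • x ≤ q • y := by
  have := qsmul_nonneg hq (sub_nonneg.mpr h)
  rw [smul_sub] at this
  exact sub_nonneg.mp this

lemma qsmul_le_qsmul_of_le {q r : ℚ} (hqr : q ≤ r) {x : Γ} (hx : 0 ≤ x) : q • x ≤ r • x := by
  have := qsmul_nonneg (sub_nonneg.mpr hqr) hx
  rw [sub_smul] at this
  exact sub_nonneg.mp this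

lemma qsmul_ne_zero {q : ℚ} (hq : q ≠ 0) {x : Γ} (hx : 0 < x) : q • x ≠ 0 := by
  rcases hq.lt_or_gt with h | h
  · have h2 := qsmul_pos (neg_pos.mpr h) hx
    rw [neg_smul] at h2
    intro he; rw [he] at h2; simp at h2
  · exact (qsmul_pos h hx).ne'

/-- the successor function `s`. -/
def sfun (ψ i : Γ → Γ) : Γ → Γ := fun y => ψ (i y)

variable {ψ i p : Γ → Γ}

lemma sIter_nonneg {m : ℤ} (hm : 0 ≤ m) (x : Γ) :
    sIter ψ i p m x = (sfun ψ i)^[m.toNat] x := by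
  rw [sIter, if_pos hm]; rfl

lemma sIter_neg {m : ℤ} (hm : m < 0) (x : Γ) :
    sIter ψ i p m x = p^[(-m).toNat] x := by
  rw [sIter, if_neg (not_le.mpr hm)]

lemma mem_psi_sfun (h : IsTlogModel ψ i) (x : Γ) :
    ∃ δ : Γ, δ ≠ 0 ∧ ψ δ = sfun ψ i x :=
  ⟨i x, (h.2.2.1 x).1.1, rfl⟩

lemma i_neg (h : IsTlogModel ψ i) {x : Γ} (hx : ∃ δ : Γ, δ ≠ 0 ∧ ψ δ = x) : i x < 0 := by
  obtain ⟨δ, hδ, rfl⟩ := hx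
  have h1 := (h.2.2.1 (ψ δ)).1
  rcases lt_trichotomy (i (ψ δ)) 0 with h' | h' | h'
  · exact h'
  · exact absurd h' h1.1
  · have h2 := h.1.2.2 (i (ψ δ)) δ h' hδ
    rw [h1.2] at h2
    exact absurd h2 (lt_irrefl _)

lemma psi_neg (h : IsTlogModel ψ i) {γ : Γ} (hγ : γ ≠ 0) : ψ (-γ) = ψ γ := by
  have h2 := h.1.2.1 γ (-1) hγ (by norm_num)
  simpa using h2

lemma i_lt_i (h : IsTlogModel ψ i) {x y : Γ}
    (hx : ∃ δ : Γ, δ ≠ 0 ∧ ψ δ = x) (hy : ∃ δ : Γ, δ ≠ 0 ∧ ψ δ = y) (hxy : x < y) :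
    i x < i y := by
  have hix := i_neg h hx
  have hiy := i_neg h hy
  by_contra hle
  push_neg at hle
  have h1 : ψ (-(i y)) ≤ ψ (-(i x)) :=
    h.2.1 (-(i x)) (-(i y)) (neg_pos.mpr hix) (neg_le_neg hle)
  rw [psi_neg h hix.ne, psi_neg h hiy.ne] at h1
  have ex := (h.2.2.1 x).1.2
  have ey := (h.2.2.1 y).1.2
  have : y ≤ x := by rw [← ex, ← ey]; exact add_le_add hle h1
  exact absurd hxy (not_lt.mpr this)

lemma sfun_lt_sfun (h : IsTlogModel ψ i)
    (hp₁ : ∀ γ : Γ, (∃ δ : Γ, δ ≠ 0 ∧ ψ δ = γ) → p (ψ (i γ)) = γ)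
    {x y : Γ} (hx : ∃ δ : Γ, δ ≠ 0 ∧ ψ δ = x) (hy : ∃ δ : Γ, δ ≠ 0 ∧ ψ δ = y)
    (hxy : x < y) : sfun ψ i x < sfun ψ i y := by
  have hi := i_lt_i h hx hy hxy
  have hiy := i_neg h hy
  have hle : ψ (-(i x)) ≤ ψ (-(i y)) :=
    h.2.1 (-(i y)) (-(i x)) (neg_pos.mpr hiy) (neg_le_neg hi.le)
  rw [psi_neg h (i_neg h hx).ne, psi_neg h hiy.ne] at hle
  rcases hle.lt_or_eq with h' | h'
  · exact h'
  · exfalso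
    have e1 := hp₁ x hx
    have e2 := hp₁ y hy
    rw [show ψ (i x) = ψ (i y) from h'] at e1
    rw [e2] at e1
    exact absurd e1 hxy.ne'
lemma sfun_gt_self (h : IsTlogModel ψ i) {x : Γ} (hx : ∃ δ : Γ, δ ≠ 0 ∧ ψ δ = x) :
    x < sfun ψ i x := by
  have hix := i_neg h hx
  have ex := (h.2.2.1 x).1.2
  have h2 : i x + ψ (i x) < 0 + ψ (i x) := add_lt_add_left hix _
  rw [zero_add, ex] at h2
  exact h2


lemma contract1 (h : IsTlogModel ψ i) {a b : Γ} (ha : 0 < a) (hab : a < b)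
    (hψ : ψ b < ψ a) : ψ a - ψ b < b - a := by
  obtain ⟨⟨hAC1, hAC2, hAC3⟩, hH, _⟩ := h
  have hδ : 0 < b - a := sub_pos.mpr hab
  have hb : b ≠ 0 := (ha.trans hab).ne'
  have habd : a + (b - a) = b := by abel
  have hmin : min (ψ a) (ψ (b - a)) ≤ ψ b := by
    have h1 := hAC1 a (b - a) ha.ne' hδ.ne' (by rw [habd]; exact hb)
    rwa [habd] at h1
  have hψδ : ψ (b - a) ≤ ψ b := by
    by_contra hc
    push_neg at hc
    exact absurd hmin (not_le.mpr (lt_min hψ hc))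
  have h3 := hAC3 (b - a) a hδ ha.ne'
  have h4 : ψ a < (b - a) + ψ b := lt_of_lt_of_le h3 (add_le_add_right hψδ _)
  exact sub_lt_iff_lt_add.mpr h4

lemma strong_contract (h : IsTlogModel ψ i) {a b : Γ} (ha : 0 < a) (hab : a < b)
    (hψ : ψ b < ψ a) {q : ℚ} (hq : 0 < q) : q • (ψ a - ψ b) < b - a := by
  set m : ℕ := max 1 ⌈q⌉₊ with hm
  have hm1 : 1 ≤ m := le_max_left _ _
  have hmq : q ≤ (m : ℚ) := le_trans (Nat.le_ceil q) (by exact_mod_cast Nat.cast_le.mpr (le_max_right _ _))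
  have hmpos : (0:ℚ) < (m:ℚ) := by positivity
  set a' : Γ := ((m:ℚ)⁻¹) • a with ha'
  set b' : Γ := ((m:ℚ)⁻¹) • b with hb'
  have hsm : ∀ z : Γ, (m:ℚ) • (((m:ℚ)⁻¹) • z) = z := by
    intro z; rw [smul_smul, mul_inv_cancel₀ hmpos.ne', one_smul]
  have ha'pos : 0 < a' := qsmul_pos (inv_pos.mpr hmpos) ha
  have hab' : a' < b' := qsmul_lt_qsmul (inv_pos.mpr hmpos) hab
  have hZ : ∀ z : Γ, z ≠ 0 → ψ ((m:ℚ)⁻¹ • z) = ψ z := by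
    intro z hz
    have hz' : ((m:ℚ)⁻¹ • z) ≠ 0 := by
      intro hc
      apply hz
      rw [← hsm z, hc, smul_zero]
    have := h.1.2.1 ((m:ℚ)⁻¹ • z) (m : ℤ) hz' (by exact_mod_cast Nat.one_le_iff_ne_zero.mp hm1)
    rw [← Int.cast_smul_eq_zsmul ℚ] at this
    push_cast at this
    rw [hsm z] at this
    exact this.symm
  have hψa : ψ a' = ψ a := hZ a ha.ne'
  have hψb : ψ b' = ψ b := hZ b (ha.trans hab).ne'
  have hc := contract1 h ha'pos hab' (by rw [hψa, hψb]; exact hψ)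
  rw [hψa, hψb] at hc
  have h2 : (m:ℚ) • (ψ a - ψ b) < (m:ℚ) • (b' - a') := qsmul_lt_qsmul hmpos hc
  have h3 : (m:ℚ) • (b' - a') = b - a := by rw [smul_sub, hb', ha', hsm, hsm]
  rw [h3] at h2
  calc q • (ψ a - ψ b) ≤ (m:ℚ) • (ψ a - ψ b) :=
        qsmul_le_qsmul_of_le hmq (sub_nonneg.mpr hψ.le)
    _ < b - a := h2

/-- one-step strong contraction for `s` on `Ψ`. -/
lemma step_contract (h : IsTlogModel ψ i)
    (hp₁ : ∀ γ : Γ, (∃ δ : Γ, δ ≠ 0 ∧ ψ δ = γ) → p (ψ (i γ)) = γ)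
    {x y : Γ} (hx : ∃ δ : Γ, δ ≠ 0 ∧ ψ δ = x) (hy : ∃ δ : Γ, δ ≠ 0 ∧ ψ δ = y)
    (hxy : x < y) {q : ℚ} (hq : 0 < q) :
    q • (sfun ψ i y - sfun ψ i x) < y - x := by
  have hi := i_lt_i h hx hy hxy
  have hix := i_neg h hx
  have hiy := i_neg h hy
  have hs := sfun_lt_sfun h hp₁ (p := p) hx hy hxy
  have key : q • (ψ (-(i y)) - ψ (-(i x))) < (-(i x)) - (-(i y)) := by
    refine strong_contract h (neg_pos.mpr hiy) (neg_lt_neg hi) ?_ hq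
    rw [psi_neg h hix.ne, psi_neg h hiy.ne]
    exact hs
  rw [psi_neg h hix.ne, psi_neg h hiy.ne] at key
  have hyx : y - x = (i y - i x) + (ψ (i y) - ψ (i x)) := by
    have ex := (h.2.2.1 x).1.2
    have ey := (h.2.2.1 y).1.2
    have h5 : (i y + ψ (i y)) - (i x + ψ (i x)) = (i y - i x) + (ψ (i y) - ψ (i x)) := by abel
    rw [ex, ey] at h5
    exact h5
  have hspos : 0 < ψ (i y) - ψ (i x) := sub_pos.mpr hs
  have : q • (ψ (i y) - ψ (i x)) < i y - i x := by
    have : (-(i x)) - (-(i y)) = i y - i x := by abel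
    rwa [this] at key
  calc q • (sfun ψ i y - sfun ψ i x) = q • (ψ (i y) - ψ (i x)) := rfl
    _ < i y - i x := this
    _ < (i y - i x) + (ψ (i y) - ψ (i x)) := lt_add_of_pos_right _ hspos
    _ = y - x := hyx.symm


lemma iter_mem (h : IsTlogModel ψ i)
    (hp₁ : ∀ γ : Γ, (∃ δ : Γ, δ ≠ 0 ∧ ψ δ = γ) → p (ψ (i γ)) = γ) :
    ∀ (d : ℕ) {x y : Γ}, (∃ δ : Γ, δ ≠ 0 ∧ ψ δ = x) → (∃ δ : Γ, δ ≠ 0 ∧ ψ δ = y) → x < y →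
      (∃ δ : Γ, δ ≠ 0 ∧ ψ δ = (sfun ψ i)^[d] x) ∧ (∃ δ : Γ, δ ≠ 0 ∧ ψ δ = (sfun ψ i)^[d] y) ∧
      (sfun ψ i)^[d] x < (sfun ψ i)^[d] y := by
  intro d
  induction d with
  | zero => intro x y hx hy hxy; exact ⟨hx, hy, hxy⟩
  | succ d ih =>
    intro x y hx hy hxy
    rw [Function.iterate_succ_apply, Function.iterate_succ_apply]
    exact ih (mem_psi_sfun h x) (mem_psi_sfun h y) (sfun_lt_sfun h hp₁ (p := p) hx hy hxy)

lemma iter_contract (h : IsTlogModel ψ i)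
    (hp₁ : ∀ γ : Γ, (∃ δ : Γ, δ ≠ 0 ∧ ψ δ = γ) → p (ψ (i γ)) = γ) :
    ∀ (d : ℕ) {x y : Γ}, (∃ δ : Γ, δ ≠ 0 ∧ ψ δ = x) → (∃ δ : Γ, δ ≠ 0 ∧ ψ δ = y) → x < y →
      ∀ q : ℚ, 0 < q → q • ((sfun ψ i)^[d+1] y - (sfun ψ i)^[d+1] x) < y - x := by
  intro d
  induction d with
  | zero =>
    intro x y hx hy hxy q hq
    simpa using step_contract h hp₁ hx hy hxy hq
  | succ d ih =>
    intro x y hx hy hxy q hq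
    rw [Function.iterate_succ_apply, Function.iterate_succ_apply]
    have h1 := ih (mem_psi_sfun h x) (mem_psi_sfun h y)
      (sfun_lt_sfun h hp₁ (p := p) hx hy hxy) q hq
    have h2 := step_contract h hp₁ hx hy hxy (q := 1) one_pos
    rw [one_smul] at h2
    exact h1.trans h2

lemma zero_chain (h : IsTlogModel ψ i)
    (hp₁ : ∀ γ : Γ, (∃ δ : Γ, δ ≠ 0 ∧ ψ δ = γ) → p (ψ (i γ)) = γ) :
    ∀ r : ℕ, (∃ δ : Γ, δ ≠ 0 ∧ ψ δ = (sfun ψ i)^[r+1] 0) ∧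
      ψ (i 0) ≤ (sfun ψ i)^[r+1] 0 ∧ (1 ≤ r → ψ (i 0) < (sfun ψ i)^[r+1] 0) := by
  intro r
  induction r with
  | zero =>
    refine ⟨?_, ?_, by omega⟩
    · simpa using mem_psi_sfun h 0
    · simp [sfun]
  | succ r ih =>
    obtain ⟨hmem, hle, _⟩ := ih
    have hgt : (sfun ψ i)^[r+1] 0 < (sfun ψ i)^[r+2] 0 := by
      conv_rhs => rw [Function.iterate_succ_apply']
      exact sfun_gt_self h hmem
    refine ⟨?_, (hle.trans hgt.le), fun _ => lt_of_le_of_lt hle hgt⟩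
    conv in (sfun ψ i)^[r+1+1] 0 => rw [Function.iterate_succ_apply']
    exact mem_psi_sfun h _

lemma p_chain (h : IsTlogModel ψ i)
    (hp₁ : ∀ γ : Γ, (∃ δ : Γ, δ ≠ 0 ∧ ψ δ = γ) → p (ψ (i γ)) = γ)
    (hp₂ : ∀ γ : Γ, (∃ δ : Γ, δ ≠ 0 ∧ ψ δ = γ) → ψ (i 0) < γ →
      (∃ δ : Γ, δ ≠ 0 ∧ ψ δ = p γ) ∧ ψ (i (p γ)) = γ)
    (t : ℕ) {x : Γ} (hx : ∃ δ : Γ, δ ≠ 0 ∧ ψ δ = x) (hxt : (sfun ψ i)^[t+1] 0 ≤ x) :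
    ∀ m : ℕ, m ≤ t →
      (∃ δ : Γ, δ ≠ 0 ∧ ψ δ = p^[m] x) ∧ (sfun ψ i)^[t+1-m] 0 ≤ p^[m] x ∧
      (sfun ψ i)^[m] (p^[m] x) = x := by
  intro m
  induction m with
  | zero => intro _; simpa using ⟨hx, hxt⟩
  | succ m ih =>
    intro hmt
    obtain ⟨hmem, hle, hit⟩ := ih (by omega)
    have e1 : t + 1 - m = (t - m) + 1 := by omega
    have htm1 : 1 ≤ t - m := by omega
    have hgt : ψ (i 0) < p^[m] x := by
      have := (zero_chain h hp₁ (p := p) (t - m)).2.2 htm1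
      rw [← e1] at this
      exact lt_of_lt_of_le this hle
    obtain ⟨hpmem, hps⟩ := hp₂ (p^[m] x) hmem hgt
    have hiter : p^[m+1] x = p (p^[m] x) := Function.iterate_succ_apply' p m x
    refine ⟨by rwa [hiter], ?_, ?_⟩
    · -- (sfun)^[t-m] 0 ≤ p^[m+1] x
      rw [hiter]
      by_contra hc
      push_neg at hc
      have e2 : t + 1 - (m+1) = t - m := by omega
      rw [e2] at hc
      have hz : (sfun ψ i)^[t-m] 0 = (sfun ψ i)^[(t-m-1)+1] 0 := by
        congr 1; omega
      have hzmem : ∃ δ : Γ, δ ≠ 0 ∧ ψ δ = (sfun ψ i)^[t-m] 0 := by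
        rw [hz]; exact (zero_chain h hp₁ (p := p) (t-m-1)).1
      have hlt := sfun_lt_sfun h hp₁ (p := p) hpmem hzmem hc
      have e3 : sfun ψ i ((sfun ψ i)^[t-m] 0) = (sfun ψ i)^[(t-m)+1] 0 :=
        (Function.iterate_succ_apply' (sfun ψ i) (t-m) 0).symm
      rw [e3, ← e1] at hlt
      have : sfun ψ i (p (p^[m] x)) = p^[m] x := hps
      rw [this] at hlt
      exact absurd hle (not_le.mpr hlt)
    · rw [hiter, Function.iterate_succ_apply]
      have : sfun ψ i (p (p^[m] x)) = p^[m] x := hps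
      rw [this, hit]

end SFunAux

/-- an `s`-function `F(x) = Σ_j q_j s^{k_j}(x) - β` is injective on its
domain `D_F` (`D_F = Ψ` if `k₁ ≥ 0`, and `D_F = [s^{-k₁+1}(0), ∞)_Ψ` if `k₁ < 0`). -/
theorem sFunction_injOn (ψ i p : Γ → Γ) (h : IsTlogModel ψ i)
    (hp₁ : ∀ γ : Γ, (∃ δ : Γ, δ ≠ 0 ∧ ψ δ = γ) → p (ψ (i γ)) = γ)
    (hp₂ : ∀ γ : Γ, (∃ δ : Γ, δ ≠ 0 ∧ ψ δ = γ) → ψ (i 0) < γ →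
      (∃ δ : Γ, δ ≠ 0 ∧ ψ δ = p γ) ∧ ψ (i (p γ)) = γ)
    (n : ℕ) (hn : 0 < n) (k : Fin n → ℤ) (hk : StrictMono k)
    (q : Fin n → ℚ) (hq : ∀ j, q j ≠ 0) (β : Γ) :
    Set.InjOn (fun x : Γ => (∑ j, q j • sIter ψ i p (k j) x) - β)
      {x : Γ | (∃ δ : Γ, δ ≠ 0 ∧ ψ δ = x) ∧
        (k ⟨0, hn⟩ < 0 → sIter ψ i p (-(k ⟨0, hn⟩) + 1) 0 ≤ x)} := by
  classical
  set j₀ : Fin n := ⟨0, hn⟩ with hj₀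
  have hj0le : ∀ j : Fin n, j₀ ≤ j := fun j => by
    rw [Fin.le_def]; exact Nat.zero_le _
  have key : ∀ x y : Γ,
      ((∃ δ : Γ, δ ≠ 0 ∧ ψ δ = x) ∧ (k j₀ < 0 → sIter ψ i p (-(k j₀) + 1) 0 ≤ x)) →
      ((∃ δ : Γ, δ ≠ 0 ∧ ψ δ = y) ∧ (k j₀ < 0 → sIter ψ i p (-(k j₀) + 1) 0 ≤ y)) →
      x < y → (∑ j, q j • sIter ψ i p (k j) x) = (∑ j, q j • sIter ψ i p (k j) y) →
      False := by
    intro x y hxS hyS hxy hsum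
    obtain ⟨hxΨ, hxdom⟩ := hxS
    obtain ⟨hyΨ, hydom⟩ := hyS
    obtain ⟨u, v, d, huΨ, hvΨ, huv, hd, hcx, hcy⟩ :
        ∃ (u v : Γ) (d : Fin n → ℕ), (∃ δ : Γ, δ ≠ 0 ∧ ψ δ = u) ∧
          (∃ δ : Γ, δ ≠ 0 ∧ ψ δ = v) ∧ u < v ∧
          (∀ j j' : Fin n, j < j' → d j < d j') ∧
          (∀ j, sIter ψ i p (k j) x = (SFunAux.sfun ψ i)^[d j] u) ∧
          (∀ j, sIter ψ i p (k j) y = (SFunAux.sfun ψ i)^[d j] v) := by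
      rcases le_or_gt 0 (k j₀) with hk0 | hk0
      · refine ⟨x, y, fun j => (k j).toNat, hxΨ, hyΨ, hxy, ?_, ?_, ?_⟩
        · intro j j' hjj'
          have h1 := hk hjj'
          have h0 : 0 ≤ k j := hk0.trans (hk.monotone (hj0le j))
          show (k j).toNat < (k j').toNat
          omega
        · intro j
          exact SFunAux.sIter_nonneg (hk0.trans (hk.monotone (hj0le j))) x
        · intro j
          exact SFunAux.sIter_nonneg (hk0.trans (hk.monotone (hj0le j))) y
      · set t : ℕ := (-(k j₀)).toNat with htdef
        have hdom0 : sIter ψ i p (-(k j₀)+1) 0 = (SFunAux.sfun ψ i)^[t+1] 0 := by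
          rw [SFunAux.sIter_nonneg (by omega)]
          congr 1
          omega
        have coh : ∀ z : Γ, (∃ δ : Γ, δ ≠ 0 ∧ ψ δ = z) →
            (SFunAux.sfun ψ i)^[t+1] 0 ≤ z →
            ∀ j, sIter ψ i p (k j) z
              = (SFunAux.sfun ψ i)^[(k j - k j₀).toNat] (p^[t] z) := by
          intro z hzΨ hzdom j
          have hpc := SFunAux.p_chain (p := p) h hp₁ hp₂ t hzΨ hzdom
          rcases le_or_gt 0 (k j) with hkj | hkj
          · rw [SFunAux.sIter_nonneg hkj]
            conv_lhs => rw [← (hpc t le_rfl).2.2]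
            rw [← Function.iterate_add_apply]
            congr 1
            omega
          · rw [SFunAux.sIter_neg hkj]
            set m : ℕ := (-(k j)).toNat with hm
            have hmt : m ≤ t := by
              have h2 : k j₀ ≤ k j := hk.monotone (hj0le j)
              omega
            obtain ⟨hwΨ, hwle, hwit⟩ := hpc m hmt
            have hwle' : (SFunAux.sfun ψ i)^[(t-m)+1] 0 ≤ p^[m] z := by
              have e : t + 1 - m = (t-m)+1 := by omega
              rwa [e] at hwle
            have h3 := SFunAux.p_chain (p := p) h hp₁ hp₂ (t-m) hwΨ hwle' (t-m) le_rfl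
            have e4 : p^[t-m] (p^[m] z) = p^[t] z := by
              rw [← Function.iterate_add_apply]
              congr 1
              omega
            rw [e4] at h3
            have e5 : (k j - k j₀).toNat = t - m := by omega
            rw [e5]
            exact h3.2.2.symm
        have ht := hxdom hk0
        have hty := hydom hk0
        rw [hdom0] at ht hty
        have hu := SFunAux.p_chain (p := p) h hp₁ hp₂ t hxΨ ht t le_rfl
        have hv := SFunAux.p_chain (p := p) h hp₁ hp₂ t hyΨ hty t le_rfl
        have huv : p^[t] x < p^[t] y := by
          rcases lt_trichotomy (p^[t] x) (p^[t] y) with h' | h' | h'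
          · exact h'
          · exfalso
            have hxy' : x = y := by rw [← hu.2.2, ← hv.2.2, h']
            exact absurd hxy' hxy.ne
          · exfalso
            have h5 := (SFunAux.iter_mem (p := p) h hp₁ t hv.1 hu.1 h').2.2
            rw [hu.2.2, hv.2.2] at h5
            exact absurd hxy (not_lt.mpr h5.le)
        exact ⟨p^[t] x, p^[t] y, fun j => (k j - k j₀).toNat, hu.1, hv.1, huv,
          fun j j' hjj' => by
            have h1 := hk hjj'
            have h2 : k j₀ ≤ k j := hk.monotone (hj0le j)
            show (k j - k j₀).toNat < (k j' - k j₀).toNat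
            omega,
          coh x hxΨ ht, coh y hyΨ hty⟩
    set E : Fin n → Γ :=
      fun j => (SFunAux.sfun ψ i)^[d j] v - (SFunAux.sfun ψ i)^[d j] u with hE
    have hEpos : ∀ j, 0 < E j := fun j =>
      sub_pos.mpr (SFunAux.iter_mem (p := p) h hp₁ (d j) huΨ hvΨ huv).2.2
    have hEdec : ∀ j j' : Fin n, j < j' → ∀ r : ℚ, 0 < r → r • E j' < E j := by
      intro j j' hjj' r hr
      obtain ⟨haΨ, hbΨ, hab⟩ := SFunAux.iter_mem (p := p) h hp₁ (d j) huΨ hvΨ huv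
      have hdd := hd j j' hjj'
      have e : ∀ z : Γ, (SFunAux.sfun ψ i)^[d j'] z
          = (SFunAux.sfun ψ i)^[(d j' - d j - 1) + 1] ((SFunAux.sfun ψ i)^[d j] z) := by
        intro z
        rw [← Function.iterate_add_apply]
        congr 1
        omega
      have h1 := SFunAux.iter_contract (p := p) h hp₁ (d j' - d j - 1) haΨ hbΨ hab r hr
      show r • ((SFunAux.sfun ψ i)^[d j'] v - (SFunAux.sfun ψ i)^[d j'] u)
        < (SFunAux.sfun ψ i)^[d j] v - (SFunAux.sfun ψ i)^[d j] u
      rw [e u, e v]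
      exact h1
    have hsum0 : ∑ j, q j • E j = 0 := by
      have h2 : (∑ j, q j • (SFunAux.sfun ψ i)^[d j] u)
          = (∑ j, q j • (SFunAux.sfun ψ i)^[d j] v) := by
        calc (∑ j, q j • (SFunAux.sfun ψ i)^[d j] u)
            = ∑ j, q j • sIter ψ i p (k j) x :=
              Finset.sum_congr rfl (fun j _ => by rw [hcx j])
          _ = ∑ j, q j • sIter ψ i p (k j) y := hsum
          _ = ∑ j, q j • (SFunAux.sfun ψ i)^[d j] v :=
              Finset.sum_congr rfl (fun j _ => by rw [hcy j])
      simp only [hE, smul_sub, Finset.sum_sub_distrib, h2, sub_self]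
    rcases Nat.lt_or_ge n 2 with h2 | h2
    · -- n = 1
      have hn1 : n = 1 := by omega
      subst hn1
      rw [Fin.sum_univ_one] at hsum0
      exact SFunAux.qsmul_ne_zero (hq 0) (hEpos 0) hsum0
    · set j₁ : Fin n := ⟨1, h2⟩ with hj₁
      have hj₀v : j₀.val = 0 := rfl
      have hj₁v : j₁.val = 1 := rfl
      have hj01 : j₀ < j₁ := by rw [Fin.lt_def, hj₀v, hj₁v]; exact Nat.zero_lt_one
      set S : ℚ := ∑ j ∈ Finset.univ.erase j₀, |q j| with hS
      have hS0 : (0:ℚ) ≤ S := Finset.sum_nonneg (fun j _ => abs_nonneg _)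
      have hEj1 : ∀ j ∈ Finset.univ.erase j₀, E j ≤ E j₁ := by
        intro j hj
        have hne := Finset.ne_of_mem_erase hj
        have hj' : 1 ≤ j.val := by
          by_contra hc
          push_neg at hc
          have hv0 : j.val = 0 := by omega
          exact hne (Fin.ext (by rw [hv0, hj₀v]))
        rcases lt_trichotomy j j₁ with hlt | heq | hgt
        · exfalso
          rw [Fin.lt_def, hj₁v] at hlt
          omega
        · rw [heq]
        · have h3 := hEdec j₁ j hgt 1 one_pos
          rw [one_smul] at h3
          exact h3.le
      have hub : ∑ j ∈ Finset.univ.erase j₀, q j • E j ≤ S • E j₁ := by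
        rw [hS, Finset.sum_smul]
        refine Finset.sum_le_sum (fun j hj => ?_)
        calc q j • E j ≤ |q j| • E j :=
              SFunAux.qsmul_le_qsmul_of_le (le_abs_self _) (hEpos j).le
          _ ≤ |q j| • E j₁ := SFunAux.qsmul_le_qsmul (abs_nonneg _) (hEj1 j hj)
      have hlb : -(S • E j₁) ≤ ∑ j ∈ Finset.univ.erase j₀, q j • E j := by
        rw [hS, Finset.sum_smul, ← Finset.sum_neg_distrib]
        refine Finset.sum_le_sum (fun j hj => ?_)
        calc -(|q j| • E j₁) ≤ -(|q j| • E j) :=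
              neg_le_neg (SFunAux.qsmul_le_qsmul (abs_nonneg _) (hEj1 j hj))
          _ = (-(|q j|)) • E j := (neg_smul _ _).symm
          _ ≤ q j • E j := SFunAux.qsmul_le_qsmul_of_le (neg_abs_le _) (hEpos j).le
      have hmain : q j₀ • E j₀ + ∑ j ∈ Finset.univ.erase j₀, q j • E j = 0 := by
        exact (Finset.add_sum_erase Finset.univ (fun j => q j • E j)
          (Finset.mem_univ j₀)).trans hsum0
      have h5 : q j₀ • E j₀ = -(∑ j ∈ Finset.univ.erase j₀, q j • E j) :=
        eq_neg_of_add_eq_zero_left hmain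
      have habs : |q j₀| • E j₀ ≤ S • E j₁ := by
        rcases (hq j₀).lt_or_gt with hneg | hpos
        · rw [abs_of_neg hneg, neg_smul, h5, neg_neg]
          exact hub
        · rw [abs_of_pos hpos, h5]
          exact neg_le.mp hlb
      have hq0 : 0 < |q j₀| := abs_pos.mpr (hq j₀)
      set r : ℚ := (S + 1) / |q j₀| with hr
      have hrpos : 0 < r := div_pos (by linarith) hq0
      have h6 := hEdec j₀ j₁ hj01 r hrpos
      have h7 : |q j₀| • (r • E j₁) < |q j₀| • E j₀ := SFunAux.qsmul_lt_qsmul hq0 h6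
      have h8 : |q j₀| • (r • E j₁) = (S+1) • E j₁ := by
        rw [smul_smul]
        congr 1
        rw [hr, mul_div_cancel₀ _ hq0.ne']
      have h9 : (S+1) • E j₁ = S • E j₁ + E j₁ := by rw [add_smul, one_smul]
      have h10 : S • E j₁ + E j₁ < S • E j₁ := by
        calc S • E j₁ + E j₁ = (S+1) • E j₁ := h9.symm
          _ = |q j₀| • (r • E j₁) := h8.symm
          _ < |q j₀| • E j₀ := h7
          _ ≤ S • E j₁ := habs
      have h11 : E j₁ < 0 := by
        have h12 : S • E j₁ + E j₁ < S • E j₁ + 0 := by rwa [add_zero]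
        exact lt_of_add_lt_add_left h12
      exact absurd h11 (not_lt.mpr (hEpos j₁).le)
  intro a ha b hb hfeq
  simp only [Set.mem_setOf_eq] at ha hb
  have hfeq' : (∑ j, q j • sIter ψ i p (k j) a) = (∑ j, q j • sIter ψ i p (k j) b) :=
    sub_left_inj.mp hfeq
  by_contra hne
  rcases (Ne.lt_or_gt hne) with hlt | hlt
  · exact key a b ha hb hlt hfeq'
  · exact key b a hb ha hlt hfeq'.symm
end
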